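/- arXiv:0810.5668 — 14 statements merged into one kernel-verified Lean document; each statement's English description precedes it below -/
import Mathlib

section
/- For six quaternions P₁,…,P₆ such that all cyclically consecutive differences are nonzero, the left and right multi-ratios are related by conjugation: M̃(P₁,P₂,P₃,P₄,P₅,P₆) = (P₁−P₆)⁻¹ · M(P₆,P₅,P₄,P₃,P₂,P₁) · (P₁−P₆). -/
/-- Right multi-ratio of six quaternions. -/
noncomputable def rightMultiRatio (P₁ P₂ P₃ P₄ P₅ P₆ : Quaternion ℝ) : Quaternion ℝ :=
  (P₁ - P₂) * (P₂ - P₃)⁻¹ * (P₃ - P₄) * (P₄ - P₅)⁻¹ * (P₅ - P₆) * (P₆ - P₁)⁻¹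

/-- Left multi-ratio of six quaternions. -/
noncomputable def leftMultiRatio (P₁ P₂ P₃ P₄ P₅ P₆ : Quaternion ℝ) : Quaternion ℝ :=
  (P₁ - P₆)⁻¹ * (P₆ - P₅) * (P₅ - P₄)⁻¹ * (P₄ - P₃) * (P₃ - P₂)⁻¹ * (P₂ - P₁)

theorem left_multiRatio_eq_conj_right_multiRatio
    (P₁ P₂ P₃ P₄ P₅ P₆ : Quaternion ℝ)
    (h₁₂ : P₁ - P₂ ≠ 0) (h₂₃ : P₂ - P₃ ≠ 0) (h₃₄ : P₃ - P₄ ≠ 0)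
    (h₄₅ : P₄ - P₅ ≠ 0) (h₅₆ : P₅ - P₆ ≠ 0) (h₆₁ : P₆ - P₁ ≠ 0) :
    leftMultiRatio P₁ P₂ P₃ P₄ P₅ P₆ =
      (P₁ - P₆)⁻¹ * rightMultiRatio P₆ P₅ P₄ P₃ P₂ P₁ * (P₁ - P₆) := by
  have h₁₆ : P₁ - P₆ ≠ 0 := fun h => h₆₁ (by rw [← neg_sub]; simp [h])
  simp [leftMultiRatio, rightMultiRatio, mul_assoc, inv_mul_cancel₀ h₁₆]
end

section
/- For six quaternions P₁,…,P₆ such that all cyclically consecutive differences are nonzero, the multi-ratio condition M(P₁,P₂,P₃,P₄,P₅,P₆) = −1 holds if and only if the reversed left multi-ratio condition M̃(P₆,P₅,P₄,P₃,P₂,P₁) = −1 holds. -/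
theorem Commute.mul_inv_eq_iff_inv_mul_eq {G₀ : Type*} [GroupWithZero G₀] {a x c : G₀}
    (hc : Commute c x) : a * x⁻¹ = c ↔ x⁻¹ * a = c := by
  rcases eq_or_ne x 0 with rfl | hx
  · simp
  · rw [mul_inv_eq_iff_eq_mul₀ hx, inv_mul_eq_iff_eq_mul₀ hx, hc.eq]

theorem leftMultiRatio_reverse_eq_inv_mul (P₁ P₂ P₃ P₄ P₅ P₆ : Quaternion ℝ) :
    leftMultiRatio P₆ P₅ P₄ P₃ P₂ P₁ =
      (P₆ - P₁)⁻¹ * ((P₁ - P₂) * (P₂ - P₃)⁻¹ * (P₃ - P₄) * (P₄ - P₅)⁻¹ * (P₅ - P₆)) := by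
  simp only [leftMultiRatio, mul_assoc]

theorem multiRatio_cond_iff_reversed_left_multiRatio_cond_general
    (P₁ P₂ P₃ P₄ P₅ P₆ : Quaternion ℝ) :
    rightMultiRatio P₁ P₂ P₃ P₄ P₅ P₆ = -1 ↔
      leftMultiRatio P₆ P₅ P₄ P₃ P₂ P₁ = -1 := by
  rw [leftMultiRatio_reverse_eq_inv_mul]
  exact (Commute.neg_one_left _).mul_inv_eq_iff_inv_mul_eq

theorem multiRatio_cond_iff_reversed_left_multiRatio_cond
    (P₁ P₂ P₃ P₄ P₅ P₆ : Quaternion ℝ)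
    (h₁₂ : P₁ - P₂ ≠ 0) (h₂₃ : P₂ - P₃ ≠ 0) (h₃₄ : P₃ - P₄ ≠ 0)
    (h₄₅ : P₄ - P₅ ≠ 0) (h₅₆ : P₅ - P₆ ≠ 0) (h₆₁ : P₆ - P₁ ≠ 0) :
    rightMultiRatio P₁ P₂ P₃ P₄ P₅ P₆ = -1 ↔
      leftMultiRatio P₆ P₅ P₄ P₃ P₂ P₁ = -1 :=
  multiRatio_cond_iff_reversed_left_multiRatio_cond_general P₁ P₂ P₃ P₄ P₅ P₆
end

section
/- Let A, B be nonzero quaternions and C any quaternion, and let P₁,…,P₆ be six quaternions with all cyclically consecutive differences nonzero. Then the right multi-ratio transforms covariantly under the invertible affine map X ↦ A·X·B + C, namely M(A·P₁·B + C, …, A·P₆·B + C) = A · M(P₁,…,P₆) · A⁻¹. In particular, the condition M(P₁,…,P₆) = −1 is invariant under all such maps. -/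
theorem multiRatio_affine_covariance
    (A B C : Quaternion ℝ) (hA : A ≠ 0) (hB : B ≠ 0)
    (P₁ P₂ P₃ P₄ P₅ P₆ : Quaternion ℝ)
    (h₁₂ : P₁ - P₂ ≠ 0) (h₂₃ : P₂ - P₃ ≠ 0) (h₃₄ : P₃ - P₄ ≠ 0)
    (h₄₅ : P₄ - P₅ ≠ 0) (h₅₆ : P₅ - P₆ ≠ 0) (h₆₁ : P₆ - P₁ ≠ 0) :
    rightMultiRatio (A * P₁ * B + C) (A * P₂ * B + C) (A * P₃ * B + C)
        (A * P₄ * B + C) (A * P₅ * B + C) (A * P₆ * B + C) =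
      A * rightMultiRatio P₁ P₂ P₃ P₄ P₅ P₆ * A⁻¹ ∧
    (rightMultiRatio P₁ P₂ P₃ P₄ P₅ P₆ = -1 →
      rightMultiRatio (A * P₁ * B + C) (A * P₂ * B + C) (A * P₃ * B + C)
        (A * P₄ * B + C) (A * P₅ * B + C) (A * P₆ * B + C) = -1) := by
  have key : rightMultiRatio (A * P₁ * B + C) (A * P₂ * B + C) (A * P₃ * B + C)
      (A * P₄ * B + C) (A * P₅ * B + C) (A * P₆ * B + C) =
      A * rightMultiRatio P₁ P₂ P₃ P₄ P₅ P₆ * A⁻¹ := by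
    have hd : ∀ X Y : Quaternion ℝ, (A * X * B + C) - (A * Y * B + C) = A * (X - Y) * B := by
      intro X Y; noncomm_ring
    have e1 : ∀ t : Quaternion ℝ, B * (B⁻¹ * t) = t := fun t => by
      rw [← mul_assoc, mul_inv_cancel₀ hB, one_mul]
    have e2 : ∀ t : Quaternion ℝ, A⁻¹ * (A * t) = t := fun t => by
      rw [← mul_assoc, inv_mul_cancel₀ hA, one_mul]
    unfold rightMultiRatio
    rw [hd, hd, hd, hd, hd, hd]
    simp only [mul_inv_rev, mul_assoc, e1, e2]
  refine ⟨key, fun h => ?_⟩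
  rw [key, h]
  simp [mul_inv_cancel₀ hA]
end

section
/- Let Φ assign to each unordered pair {i,k} of distinct indices i,k ∈ {1,2,3,4} a quaternion Φᵢₖ = Φₖᵢ, and suppose the six quaternions Φ₁₂, Φ₁₃, Φ₁₄, Φ₂₃, Φ₂₄, Φ₃₄ are pairwise distinct. Then for every permutation π of {1,2,3,4}, the multi-ratio condition M(Φ_{π(1)π(4)}, Φ_{π(1)π(2)}, Φ_{π(2)π(4)}, Φ_{π(2)π(3)}, Φ_{π(3)π(4)}, Φ_{π(1)π(3)}) = −1 holds if and only if M(Φ₁₄, Φ₁₂, Φ₂₄, Φ₂₃, Φ₃₄, Φ₁₃) = −1 holds. In other words, the multi-ratio condition on the six points of an octahedral configuration is invariant under all permutations of the indices 1,2,3,4. -/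
section DivisionRing

variable {K : Type*} [DivisionRing K]

theorem mul_mul_inv_eq_neg_one_iff {x m : K} (hx : x ≠ 0) : x * m * x⁻¹ = -1 ↔ m = -1 := by
  rw [mul_inv_eq_iff_eq_mul₀ hx, neg_one_mul, ← mul_neg_one, mul_right_inj' hx]

theorem sub_mul_inv_mul_sub_eq_sub_iff {b c d e f : K} (hdf : d ≠ f) (hef : e ≠ f) :
    (e - d) * (d - f)⁻¹ * (f - b) = b - c ↔ (d - f)⁻¹ * (d - b) = (e - f)⁻¹ * (e - c) := by
  have hdf' : d - f ≠ 0 := sub_ne_zero.mpr hdf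
  set X := (d - f)⁻¹ * (d - b)
  have hfb : (d - f)⁻¹ * (f - b) = X - 1 := by
    rw [show f - b = (d - b) - (d - f) by abel, mul_sub, inv_mul_cancel₀ hdf']
  have hdb : (d - f) * X = d - b := mul_inv_cancel_left₀ hdf' _
  have hdiff : (e - d) * (d - f)⁻¹ * (f - b) - (b - c) = (e - f) * X - (e - c) :=
    calc (e - d) * (d - f)⁻¹ * (f - b) - (b - c) = (e - d) * (X - 1) - (b - c) := by
          rw [mul_assoc, hfb]
      _ = (e - d) * X + (d - f) * X - (e - c) := by rw [hdb]; noncomm_ring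
      _ = (e - f) * X - (e - c) := by noncomm_ring
  rw [← sub_eq_zero, hdiff, sub_eq_zero, eq_inv_mul_iff_mul_eq₀ (sub_ne_zero.mpr hef)]

end DivisionRing

theorem rightMultiRatio_sub_const (P₁ P₂ P₃ P₄ P₅ P₆ a : Quaternion ℝ) :
    rightMultiRatio (P₁ - a) (P₂ - a) (P₃ - a) (P₄ - a) (P₅ - a) (P₆ - a) =
      rightMultiRatio P₁ P₂ P₃ P₄ P₅ P₆ := by
  simp only [rightMultiRatio, sub_sub_sub_cancel_right]

theorem rightMultiRatio_reverse (P₁ P₂ P₃ P₄ P₅ P₆ : Quaternion ℝ) :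
    rightMultiRatio P₁ P₆ P₅ P₄ P₃ P₂ = (rightMultiRatio P₁ P₂ P₃ P₄ P₅ P₆)⁻¹ := by
  simp only [rightMultiRatio, mul_inv_rev, inv_inv]
  rw [← neg_sub P₆ P₁, ← neg_sub P₅ P₆, ← neg_sub P₄ P₅, ← neg_sub P₃ P₄, ← neg_sub P₂ P₃,
    ← neg_sub P₁ P₂]
  simp only [inv_neg, neg_mul, mul_neg, neg_neg, mul_assoc]

theorem rightMultiRatio_rotate {P₁ P₂ P₃ P₄ P₅ P₆ : Quaternion ℝ} (h₁₂ : P₁ ≠ P₂) (h₂₃ : P₂ ≠ P₃) :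
    rightMultiRatio P₁ P₂ P₃ P₄ P₅ P₆ =
      (P₁ - P₂) * (P₂ - P₃)⁻¹ * rightMultiRatio P₃ P₄ P₅ P₆ P₁ P₂ *
        ((P₁ - P₂) * (P₂ - P₃)⁻¹)⁻¹ := by
  have hX : (P₁ - P₂) * (P₂ - P₃)⁻¹ ≠ 0 :=
    mul_ne_zero (sub_ne_zero.mpr h₁₂) (inv_ne_zero (sub_ne_zero.mpr h₂₃))
  rw [eq_mul_inv_iff_mul_eq₀ hX]
  simp only [rightMultiRatio, mul_assoc]

theorem rightMultiRatio_second_zero {p q r s t : Quaternion ℝ} (hp : p ≠ 0) (hq : q ≠ 0)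
    (hr : r ≠ 0) (hs : s ≠ 0) (ht : t ≠ 0) :
    rightMultiRatio p 0 q r s t =
      p * -((q⁻¹ - r⁻¹) * (r⁻¹ - s⁻¹)⁻¹ * (s⁻¹ - t⁻¹) * (t⁻¹ - p⁻¹)⁻¹) * p⁻¹ := by
  rw [rightMultiRatio, ← neg_sub s⁻¹ r⁻¹, ← neg_sub p⁻¹ t⁻¹, inv_sub_inv' hq hr, inv_sub_inv' hs hr,
    inv_sub_inv' hs ht, inv_sub_inv' hp ht, ← neg_sub q r, ← neg_sub s t]
  simp only [sub_zero, zero_sub, mul_inv_rev, inv_inv, inv_neg, mul_assoc, neg_mul, mul_neg, neg_neg,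
    mul_inv_cancel_left₀, inv_mul_cancel_left₀, mul_inv_cancel₀, mul_one, hp, hr, hs, ht, ne_eq,
    not_false_eq_true]

theorem rightMultiRatio_reverse_eq_neg_one_iff (P₁ P₂ P₃ P₄ P₅ P₆ : Quaternion ℝ) :
    rightMultiRatio P₁ P₆ P₅ P₄ P₃ P₂ = -1 ↔ rightMultiRatio P₁ P₂ P₃ P₄ P₅ P₆ = -1 := by
  rw [rightMultiRatio_reverse, inv_eq_iff_eq_inv, inv_neg, inv_one]

theorem rightMultiRatio_rotate_eq_neg_one_iff {P₁ P₂ P₃ P₄ P₅ P₆ : Quaternion ℝ} (h₁₂ : P₁ ≠ P₂)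
    (h₂₃ : P₂ ≠ P₃) :
    rightMultiRatio P₃ P₄ P₅ P₆ P₁ P₂ = -1 ↔ rightMultiRatio P₁ P₂ P₃ P₄ P₅ P₆ = -1 := by
  rw [rightMultiRatio_rotate h₁₂ h₂₃, mul_mul_inv_eq_neg_one_iff
    (mul_ne_zero (sub_ne_zero.mpr h₁₂) (inv_ne_zero (sub_ne_zero.mpr h₂₃)))]

theorem rightMultiRatio_second_zero_eq_neg_one_iff {p q r s t : Quaternion ℝ} (hp : p ≠ 0)
    (hq : q ≠ 0) (hr : r ≠ 0) (hs : s ≠ 0) (ht : t ≠ 0) (htp : t ≠ p) :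
    rightMultiRatio p 0 q r s t = -1 ↔
      (q⁻¹ - r⁻¹) * (r⁻¹ - s⁻¹)⁻¹ * (s⁻¹ - t⁻¹) = t⁻¹ - p⁻¹ := by
  rw [rightMultiRatio_second_zero hp hq hr hs ht, mul_mul_inv_eq_neg_one_iff hp, neg_inj,
    mul_inv_eq_one₀ (sub_ne_zero.mpr (inv_injective.ne htp))]

theorem rightMultiRatio_swap_eq_neg_one_iff {a b c d e f : Quaternion ℝ} (hb : b ≠ a) (hc : c ≠ a)
    (hd : d ≠ a) (he : e ≠ a) (hf : f ≠ a) (hbc : b ≠ c) (hdf : d ≠ f) (hef : e ≠ f) :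
    rightMultiRatio b a d e f c = -1 ↔ rightMultiRatio c a e d f b = -1 := by
  have h0 {x : Quaternion ℝ} (h : x ≠ a) : x - a ≠ 0 := sub_ne_zero.mpr h
  have hinv {x y : Quaternion ℝ} (h : x ≠ y) : (x - a)⁻¹ ≠ (y - a)⁻¹ :=
    inv_injective.ne (sub_left_injective.ne h)
  simp only [← rightMultiRatio_sub_const _ a _ _ _ _ a, sub_self]
  rw [rightMultiRatio_second_zero_eq_neg_one_iff (h0 hb) (h0 hd) (h0 he) (h0 hf) (h0 hc)
      (sub_left_injective.ne hbc.symm),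
    rightMultiRatio_second_zero_eq_neg_one_iff (h0 hc) (h0 he) (h0 hd) (h0 hf) (h0 hb)
      (sub_left_injective.ne hbc),
    sub_mul_inv_mul_sub_eq_sub_iff (hinv hef) (hinv hdf),
    sub_mul_inv_mul_sub_eq_sub_iff (hinv hdf) (hinv hef), eq_comm]

open Equiv

def IsOctahedralLabelling (Φ : Fin 4 → Fin 4 → Quaternion ℝ) : Prop :=
  (∀ i k, Φ i k = Φ k i) ∧ ∀ i k l m : Fin 4, i ≠ k → l ≠ m →
    ({i, k} : Finset (Fin 4)) ≠ ({l, m} : Finset (Fin 4)) → Φ i k ≠ Φ l m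

def HexagonCond (Φ : Fin 4 → Fin 4 → Quaternion ℝ) : Prop :=
  rightMultiRatio (Φ 0 3) (Φ 0 1) (Φ 1 3) (Φ 1 2) (Φ 2 3) (Φ 0 2) = -1

namespace IsOctahedralLabelling

variable {Φ : Fin 4 → Fin 4 → Quaternion ℝ} (hΦ : IsOctahedralLabelling Φ)
include hΦ

theorem symm (i k : Fin 4) : Φ i k = Φ k i := hΦ.1 i k

theorem ne (i k l m : Fin 4) (hik : i ≠ k := by decide) (hlm : l ≠ m := by decide)
    (h : ({i, k} : Finset (Fin 4)) ≠ {l, m} := by decide) : Φ i k ≠ Φ l m :=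
  hΦ.2 i k l m hik hlm h

theorem relabel (σ : Perm (Fin 4)) : IsOctahedralLabelling fun i k => Φ (σ i) (σ k) := by
  refine ⟨fun i k => hΦ.symm _ _, fun i k l m hik hlm hne => ?_⟩
  refine hΦ.2 _ _ _ _ (σ.injective.ne hik) (σ.injective.ne hlm) fun h => hne ?_
  apply Finset.image_injective σ.injective
  simpa [Finset.image_insert] using h

theorem hexagonCond_swap01_iff :
    HexagonCond (fun i k => Φ (swap 0 1 i) (swap 0 1 k)) ↔ HexagonCond Φ := by
  simp only [HexagonCond, swap_apply_def, Fin.reduceEq, ↓reduceIte]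
  rw [hΦ.symm 1 0, rightMultiRatio_reverse_eq_neg_one_iff,
    rightMultiRatio_rotate_eq_neg_one_iff (hΦ.ne 0 3 0 1) (hΦ.ne 0 1 1 3)]

theorem hexagonCond_swap12_iff :
    HexagonCond (fun i k => Φ (swap 1 2 i) (swap 1 2 k)) ↔ HexagonCond Φ := by
  simp only [HexagonCond, swap_apply_def, zero_ne_one, Fin.reduceEq, ↓reduceIte]
  rw [hΦ.symm 2 1]
  exact rightMultiRatio_reverse_eq_neg_one_iff ..

theorem hexagonCond_swap23_iff :
    HexagonCond (fun i k => Φ (swap 2 3 i) (swap 2 3 k)) ↔ HexagonCond Φ := by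
  simp only [HexagonCond, swap_apply_def, Fin.reduceEq, ↓reduceIte]
  rw [hΦ.symm 3 2]
  exact rightMultiRatio_swap_eq_neg_one_iff (hΦ.ne 0 2 0 1) (hΦ.ne 0 3 0 1) (hΦ.ne 1 2 0 1)
    (hΦ.ne 1 3 0 1) (hΦ.ne 2 3 0 1) (hΦ.ne 0 2 0 3) (hΦ.ne 1 2 2 3) (hΦ.ne 1 3 2 3)

end IsOctahedralLabelling

def hexagonCondSymmetries : Submonoid (Perm (Fin 4)) where
  carrier := {π | ∀ Φ, IsOctahedralLabelling Φ →
    (HexagonCond (fun i k => Φ (π i) (π k)) ↔ HexagonCond Φ)}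
  one_mem' _ _ := Iff.rfl
  mul_mem' {π _} hπ hτ Φ hΦ := (hτ _ (hΦ.relabel π)).trans (hπ Φ hΦ)

theorem hexagonCondSymmetries_eq_top : hexagonCondSymmetries = ⊤ := by
  rw [eq_top_iff, ← Perm.mclosure_swap_castSucc_succ, Submonoid.closure_le, Set.range_subset_iff]
  intro i Φ hΦ
  fin_cases i
  · exact hΦ.hexagonCond_swap01_iff
  · exact hΦ.hexagonCond_swap12_iff
  · exact hΦ.hexagonCond_swap23_iff

theorem multiRatio_cond_perm_invariant
    (Φ : Fin 4 → Fin 4 → Quaternion ℝ)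
    (hsymm : ∀ i k, Φ i k = Φ k i)
    (hdist : ∀ i k l m : Fin 4, i ≠ k → l ≠ m →
      ({i, k} : Finset (Fin 4)) ≠ ({l, m} : Finset (Fin 4)) → Φ i k ≠ Φ l m)
    (π : Equiv.Perm (Fin 4)) :
    rightMultiRatio (Φ (π 0) (π 3)) (Φ (π 0) (π 1)) (Φ (π 1) (π 3))
        (Φ (π 1) (π 2)) (Φ (π 2) (π 3)) (Φ (π 0) (π 2)) = -1 ↔
      rightMultiRatio (Φ 0 3) (Φ 0 1) (Φ 1 3) (Φ 1 2) (Φ 2 3) (Φ 0 2) = -1 := by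
  have hπ : π ∈ hexagonCondSymmetries := hexagonCondSymmetries_eq_top ▸ Submonoid.mem_top π
  exact hπ Φ ⟨hsymm, hdist⟩
end

section
/- Let Φ₁₂, Φ₁₃, Φ₁₄, Φ₂₃, Φ₂₄, Φ₃₄ be six pairwise distinct quaternions. Then M(Φ₁₄, Φ₂₄, Φ₁₂, Φ₂₃, Φ₁₃, Φ₃₄) = −1 holds if and only if M(Φ₁₄, Φ₁₂, Φ₂₄, Φ₂₃, Φ₃₄, Φ₁₃) = −1 holds; that is, the multi-ratio condition is invariant under the index permutation (1,2,3,4) → (4,2,3,1). -/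
private lemma aux_key {K : Type*} [DivisionRing K] (A B C D E : K) (hB : B ≠ 0) (hD : D ≠ 0)
    (hE : E ≠ 0) (hDE : D + E ≠ 0)
    (h : A * B⁻¹ * C * D⁻¹ * E = A + B + C + D + E) :
    (A + B) * B⁻¹ * (B + C) * (D + E)⁻¹ * E = A + B + C + D := by
  have h2 : A * B⁻¹ * C = (A + B + C + D + E) * E⁻¹ * D := by
    rw [← h, mul_inv_cancel_right₀ hE, inv_mul_cancel_right₀ hD]
  have hb : (A + B) * B⁻¹ = A * B⁻¹ + 1 := by rw [add_mul, mul_inv_cancel₀ hB]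
  have h1 : (A + B) * B⁻¹ * (B + C) = A + A * B⁻¹ * C + (B + C) := by
    rw [hb, add_mul, one_mul, mul_add, inv_mul_cancel_right₀ hB]
  rw [h1, h2]
  have h3 : A + (A + B + C + D + E) * E⁻¹ * D + (B + C)
      = (A + B + C + D + E) * E⁻¹ * (D + E) - (D + E) := by
    rw [mul_add, inv_mul_cancel_right₀ hE]; abel
  rw [h3, sub_mul, mul_inv_cancel_right₀ hDE, mul_inv_cancel₀ hDE, sub_mul, one_mul,
    inv_mul_cancel_right₀ hE]
  abel

private lemma cond_swap (x₁ x₂ x₃ x₄ x₅ x₆ : Quaternion ℝ)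
    (h23 : x₂ ≠ x₃) (h45 : x₄ ≠ x₅) (h56 : x₅ ≠ x₆) (h46 : x₄ ≠ x₆)
    (h51 : x₅ ≠ x₁) (h61 : x₆ ≠ x₁)
    (h : rightMultiRatio x₁ x₂ x₃ x₄ x₅ x₆ = -1) :
    rightMultiRatio x₁ x₃ x₂ x₄ x₆ x₅ = -1 := by
  unfold rightMultiRatio at h ⊢
  have hB : x₂ - x₃ ≠ 0 := sub_ne_zero.mpr h23
  have hD : x₄ - x₅ ≠ 0 := sub_ne_zero.mpr h45
  have hE : x₅ - x₆ ≠ 0 := sub_ne_zero.mpr h56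
  have hF : x₆ - x₁ ≠ 0 := sub_ne_zero.mpr h61
  have hDE : (x₄ - x₅) + (x₅ - x₆) ≠ 0 := by
    have : (x₄ - x₅) + (x₅ - x₆) = x₄ - x₆ := by abel
    rw [this]; exact sub_ne_zero.mpr h46
  have hS : (x₁ - x₂) + (x₂ - x₃) + (x₃ - x₄) + (x₄ - x₅) ≠ 0 := by
    have : (x₁ - x₂) + (x₂ - x₃) + (x₃ - x₄) + (x₄ - x₅) = x₁ - x₅ := by abel
    rw [this]; exact sub_ne_zero.mpr h51.symm
  have hH : (x₁ - x₂) * (x₂ - x₃)⁻¹ * (x₃ - x₄) * (x₄ - x₅)⁻¹ * (x₅ - x₆)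
      = (x₁ - x₂) + (x₂ - x₃) + (x₃ - x₄) + (x₄ - x₅) + (x₅ - x₆) := by
    have hX : (x₁ - x₂) * (x₂ - x₃)⁻¹ * (x₃ - x₄) * (x₄ - x₅)⁻¹ * (x₅ - x₆) = -(x₆ - x₁) := by
      have h' := congrArg (· * (x₆ - x₁)) h
      simpa [inv_mul_cancel_right₀ hF] using h'
    rw [hX]; abel
  have key := aux_key (x₁ - x₂) (x₂ - x₃) (x₃ - x₄) (x₄ - x₅) (x₅ - x₆) hB hD hE hDE hH
  have e1 : x₁ - x₃ = (x₁ - x₂) + (x₂ - x₃) := by abel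
  have e2 : x₃ - x₂ = -(x₂ - x₃) := by abel
  have e3 : x₂ - x₄ = (x₂ - x₃) + (x₃ - x₄) := by abel
  have e4 : x₄ - x₆ = (x₄ - x₅) + (x₅ - x₆) := by abel
  have e5 : x₆ - x₅ = -(x₅ - x₆) := by abel
  have e6 : x₅ - x₁ = -((x₁ - x₂) + (x₂ - x₃) + (x₃ - x₄) + (x₄ - x₅)) := by abel
  rw [e1, e2, e3, e4, e5, e6, inv_neg, inv_neg]
  simp only [mul_neg, neg_mul, neg_neg]
  rw [key, mul_inv_cancel₀ hS]

theorem multiRatio_cond_invariant_perm_4231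
    (Φ₁₂ Φ₁₃ Φ₁₄ Φ₂₃ Φ₂₄ Φ₃₄ : Quaternion ℝ)
    (hdist : List.Pairwise (· ≠ ·) [Φ₁₂, Φ₁₃, Φ₁₄, Φ₂₃, Φ₂₄, Φ₃₄]) :
    rightMultiRatio Φ₁₄ Φ₂₄ Φ₁₂ Φ₂₃ Φ₁₃ Φ₃₄ = -1 ↔
      rightMultiRatio Φ₁₄ Φ₁₂ Φ₂₄ Φ₂₃ Φ₃₄ Φ₁₃ = -1 := by
  simp only [List.pairwise_cons, List.mem_cons, List.not_mem_nil] at hdist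
  obtain ⟨h12, h13, h14, h23, h24⟩ := hdist
  have n1224 : Φ₁₂ ≠ Φ₂₄ := h12 _ (by tauto)
  have n1323 : Φ₁₃ ≠ Φ₂₃ := h13 _ (by tauto)
  have n1334 : Φ₁₃ ≠ Φ₃₄ := h13 _ (by tauto)
  have n2334 : Φ₂₃ ≠ Φ₃₄ := h23 _ (by tauto)
  have n1314 : Φ₁₃ ≠ Φ₁₄ := h13 _ (by tauto)
  have n1434 : Φ₁₄ ≠ Φ₃₄ := h14 _ (by tauto)
  constructor
  · intro h
    exact cond_swap Φ₁₄ Φ₂₄ Φ₁₂ Φ₂₃ Φ₁₃ Φ₃₄ n1224.symm n1323.symm n1334 n2334 n1314 n1434.symm h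
  · intro h
    exact cond_swap Φ₁₄ Φ₁₂ Φ₂₄ Φ₂₃ Φ₃₄ Φ₁₃ n1224 n2334 n1334.symm n1323.symm n1434.symm n1314 h
end

section
/- Let Φ₁₂, Φ₁₃, Φ₁₄, Φ₂₃, Φ₂₄, Φ₃₄ be six pairwise distinct quaternions. Then M(Φ₂₄, Φ₁₂, Φ₂₃, Φ₁₃, Φ₃₄, Φ₁₄) = −1 holds if and only if M̃(Φ₁₄, Φ₂₄, Φ₁₂, Φ₂₃, Φ₁₃, Φ₃₄) = −1 holds. -/
set_option maxHeartbeats 1000000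


private lemma key {K : Type*} [DivisionRing K] {a b c d e f : K}
    (hf : f ≠ 0) :
    a * b⁻¹ * c * d⁻¹ * e * f⁻¹ = -1 ↔ e⁻¹ * d * c⁻¹ * b * a⁻¹ * f = -1 := by
  constructor
  · intro h
    have h1 : a * b⁻¹ * c * d⁻¹ * e = -f := by
      have := congrArg (· * f) h
      simpa [mul_assoc, inv_mul_cancel₀ hf] using this
    have h2 : (a * b⁻¹ * c * d⁻¹ * e)⁻¹ = e⁻¹ * d * c⁻¹ * b * a⁻¹ := by
      simp [mul_inv_rev, mul_assoc]
    rw [h1] at h2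
    rw [← h2]
    simp [inv_neg, inv_mul_cancel₀ hf]
  · intro h
    have h1 : e⁻¹ * d * c⁻¹ * b * a⁻¹ = -f⁻¹ := by
      have := congrArg (· * f⁻¹) h
      simpa [mul_assoc, mul_inv_cancel₀ hf] using this
    have h2 : (e⁻¹ * d * c⁻¹ * b * a⁻¹)⁻¹ = a * b⁻¹ * c * d⁻¹ * e := by
      simp [mul_inv_rev, mul_assoc]
    rw [h1] at h2
    rw [← h2]
    simp [inv_neg, mul_inv_cancel₀ hf]

theorem multiRatio_rotation_left_multiRatio_equiv
    (Φ₁₂ Φ₁₃ Φ₁₄ Φ₂₃ Φ₂₄ Φ₃₄ : Quaternion ℝ)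
    (hdist : List.Pairwise (· ≠ ·) [Φ₁₂, Φ₁₃, Φ₁₄, Φ₂₃, Φ₂₄, Φ₃₄]) :
    rightMultiRatio Φ₂₄ Φ₁₂ Φ₂₃ Φ₁₃ Φ₃₄ Φ₁₄ = -1 ↔
      leftMultiRatio Φ₁₄ Φ₂₄ Φ₁₂ Φ₂₃ Φ₁₃ Φ₃₄ = -1 := by
  simp only [List.pairwise_cons, List.mem_cons, List.not_mem_nil] at hdist
  obtain ⟨h12, h13, h14, h23, h24, -⟩ := hdist
  have hf : Φ₁₄ - Φ₂₄ ≠ 0 :=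
    sub_ne_zero.2 (h14 Φ₂₄ (Or.inr (Or.inl rfl)))
  have hL : leftMultiRatio Φ₁₄ Φ₂₄ Φ₁₂ Φ₂₃ Φ₁₃ Φ₃₄ =
      (Φ₃₄ - Φ₁₄)⁻¹ * (Φ₁₃ - Φ₃₄) * (Φ₂₃ - Φ₁₃)⁻¹ * (Φ₁₂ - Φ₂₃) * (Φ₂₄ - Φ₁₂)⁻¹ *
        (Φ₁₄ - Φ₂₄) := by
    unfold leftMultiRatio
    rw [show Φ₁₄ - Φ₃₄ = -(Φ₃₄ - Φ₁₄) from (neg_sub _ _).symm,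
      show Φ₃₄ - Φ₁₃ = -(Φ₁₃ - Φ₃₄) from (neg_sub _ _).symm,
      show Φ₁₃ - Φ₂₃ = -(Φ₂₃ - Φ₁₃) from (neg_sub _ _).symm,
      show Φ₂₃ - Φ₁₂ = -(Φ₁₂ - Φ₂₃) from (neg_sub _ _).symm,
      show Φ₁₂ - Φ₂₄ = -(Φ₂₄ - Φ₁₂) from (neg_sub _ _).symm,
      show Φ₂₄ - Φ₁₄ = -(Φ₁₄ - Φ₂₄) from (neg_sub _ _).symm]
    simp only [inv_neg, neg_mul, mul_neg, neg_neg]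
  rw [hL]
  unfold rightMultiRatio
  exact key hf
end

section
/- Let Φ₁₂, Φ₁₃, Φ₁₄, Φ₂₃, Φ₂₄, Φ₃₄ be six pairwise distinct quaternions. Then M(Φ₁₃, Φ₂₃, Φ₁₂, Φ₂₄, Φ₁₄, Φ₃₄) = −1 holds if and only if M̃(Φ₁₃, Φ₁₄, Φ₁₂, Φ₂₄, Φ₂₃, Φ₃₄) = −1 holds. -/
private lemma aux_core (a b c d e f : Quaternion ℝ)
    (hfb : f - b ≠ 0) (hbf : b - f ≠ 0) (hbd : b - d ≠ 0) (hda : d - a ≠ 0)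
    (hae : a - e ≠ 0) (hec : e - c ≠ 0) (hfd : f - d ≠ 0) (hde : d - e ≠ 0)
    (hea : e - a ≠ 0) (hac : a - c ≠ 0) :
    ((b-d)*(d-a)⁻¹*(a-e)*(e-c)⁻¹*(c-f)*(f-b)⁻¹ = -1) ↔
    ((b-f)⁻¹*(f-d)*(d-e)⁻¹*(e-a)*(a-c)⁻¹*(c-b) = -1) := by
  set L : Quaternion ℝ := (e-c)*(a-e)⁻¹*(d-a)*(b-d)⁻¹ with hLdef
  set R : Quaternion ℝ := (a-c)*(e-a)⁻¹*(d-e) with hRdef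
  -- key identity
  have hK : L*(b-d) + R = c - d := by
    have hL1 : L*(b-d) = (e-c)*(a-e)⁻¹*(d-a) := by
      rw [hLdef]; exact inv_mul_cancel_right₀ hbd _
    have hinv : (e-a)⁻¹ = -(a-e)⁻¹ := by rw [← neg_sub a e, inv_neg]
    rw [hL1, hRdef, hinv]
    have h1 : (a-e)*(a-e)⁻¹ = 1 := mul_inv_cancel₀ hae
    have h2 : (a-e)⁻¹*(a-e) = 1 := inv_mul_cancel₀ hae
    have expand : (e-c)*(a-e)⁻¹*(d-a) + (a-c)*(-(a-e)⁻¹)*(d-e)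
        = -(((a-e)*(a-e)⁻¹)*(d-a)) - (a-c)*((a-e)⁻¹*(a-e)) := by noncomm_ring
    rw [expand, h1, h2, one_mul, mul_one]
    abel
  -- first reduction
  have hcomp1 : (b-d)*(d-a)⁻¹*(a-e)*(e-c)⁻¹*(L*(b-f))*(f-b)⁻¹ = -1 := by
    rw [hLdef]
    simp only [mul_assoc]
    rw [inv_mul_cancel_left₀ hec, mul_inv_cancel_left₀ hae, inv_mul_cancel_left₀ hda,
      mul_inv_cancel_left₀ hbd, ← neg_sub f b, neg_mul, mul_inv_cancel₀ hfb]
  have hU : (b-d)*(d-a)⁻¹*(a-e)*(e-c)⁻¹ ≠ 0 :=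
    mul_ne_zero (mul_ne_zero (mul_ne_zero hbd (inv_ne_zero hda)) hae) (inv_ne_zero hec)
  have hM1 : ((b-d)*(d-a)⁻¹*(a-e)*(e-c)⁻¹*(c-f)*(f-b)⁻¹ = -1) ↔ (c - f = L*(b-f)) := by
    constructor
    · intro h
      exact mul_left_cancel₀ hU (mul_right_cancel₀ (inv_ne_zero hfb) (h.trans hcomp1.symm))
    · intro h; rw [h]; exact hcomp1
  -- second reduction
  have hcomp2 : (b-f)⁻¹*(f-d)*(d-e)⁻¹*(e-a)*(a-c)⁻¹*(R*((f-d)⁻¹*(f-b))) = -1 := by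
    rw [hRdef]
    simp only [mul_assoc]
    rw [inv_mul_cancel_left₀ hac, mul_inv_cancel_left₀ hea, inv_mul_cancel_left₀ hde,
      mul_inv_cancel_left₀ hfd, ← neg_sub b f, mul_neg, inv_mul_cancel₀ hbf]
  have hV : (b-f)⁻¹*(f-d)*(d-e)⁻¹*(e-a)*(a-c)⁻¹ ≠ 0 :=
    mul_ne_zero (mul_ne_zero (mul_ne_zero (mul_ne_zero (inv_ne_zero hbf) hfd)
      (inv_ne_zero hde)) hea) (inv_ne_zero hac)
  have hM2 : ((b-f)⁻¹*(f-d)*(d-e)⁻¹*(e-a)*(a-c)⁻¹*(c-b) = -1) ↔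
      (c - b = R*((f-d)⁻¹*(f-b))) := by
    constructor
    · intro h
      exact mul_left_cancel₀ hV (h.trans hcomp2.symm)
    · intro h; rw [h]; exact hcomp2
  rw [hM1, hM2]
  constructor
  · intro h
    have hR1 : R = (1 - L)*(f-d) := by
      have t2 : R = (c-d) - L*(b-d) := by rw [← hK]; abel
      have hcd : c - d = L*(b-f) + (f - d) := by rw [← h]; abel
      rw [t2, hcd]
      have hbf2 : b - f = (b-d) - (f-d) := by abel
      rw [hbf2]; noncomm_ring
    rw [hR1, mul_assoc (1-L) (f-d), mul_inv_cancel_left₀ hfd]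
    have hcb : c - b = L*(b-f) + (f-b) := by rw [← h]; abel
    rw [hcb, show b - f = -(f-b) by abel]
    noncomm_ring
  · intro h
    have hR2 : R = (c-b)*(f-b)⁻¹*(f-d) := by
      rw [h]
      simp only [mul_assoc]
      rw [mul_inv_cancel_left₀ hfb, inv_mul_cancel₀ hfd, mul_one]
    have e2 : (c-b)*(f-b)⁻¹*(f-b) = c-b := inv_mul_cancel_right₀ hfb _
    have hs : (1 - L)*(b-d) = (c-b)*(f-b)⁻¹*(b-d) := by
      have t1 : (c-b)*(f-b)⁻¹*(b-d)
          = (c-b)*(f-b)⁻¹*(f-d) - (c-b)*(f-b)⁻¹*(f-b) := by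
        rw [← mul_sub]; congr 1; abel
      have t2 : R = (c-d) - L*(b-d) := by rw [← hK]; abel
      rw [t1, ← hR2, e2, t2]
      noncomm_ring
    have hs2 : (1 - L) = (c-b)*(f-b)⁻¹ := mul_right_cancel₀ hbd hs
    have hcb : c - b = (1 - L)*(f-b) := by
      rw [hs2]; exact (inv_mul_cancel_right₀ hfb _).symm
    have t3 : c - f = (c-b) - (f-b) := by abel
    rw [t3, hcb, show b - f = -(f-b) by abel]
    noncomm_ring

theorem multiRatio_left_multiRatio_equivalence_E35
    (Φ₁₂ Φ₁₃ Φ₁₄ Φ₂₃ Φ₂₄ Φ₃₄ : Quaternion ℝ)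
    (hdist : List.Pairwise (· ≠ ·) [Φ₁₂, Φ₁₃, Φ₁₄, Φ₂₃, Φ₂₄, Φ₃₄]) :
    rightMultiRatio Φ₁₃ Φ₂₃ Φ₁₂ Φ₂₄ Φ₁₄ Φ₃₄ = -1 ↔
      leftMultiRatio Φ₁₃ Φ₁₄ Φ₁₂ Φ₂₄ Φ₂₃ Φ₃₄ = -1 := by
  simp only [List.pairwise_cons, List.mem_cons, List.not_mem_nil, or_false,
    List.Pairwise.nil, and_true, forall_eq_or_imp, forall_eq] at hdist
  obtain ⟨⟨h1, h2, h3, h4, h5⟩, ⟨h6, h7, h8, h9⟩, ⟨h10, h11, h12⟩, ⟨h13, h14⟩, h15⟩ := hdist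
  simp only [rightMultiRatio, leftMultiRatio]
  exact aux_core Φ₁₂ Φ₁₃ Φ₁₄ Φ₂₃ Φ₂₄ Φ₃₄
    (sub_ne_zero_of_ne h9.symm) (sub_ne_zero_of_ne h9) (sub_ne_zero_of_ne h7)
    (sub_ne_zero_of_ne h3.symm) (sub_ne_zero_of_ne h4) (sub_ne_zero_of_ne h11.symm)
    (sub_ne_zero_of_ne h14.symm) (sub_ne_zero_of_ne h13) (sub_ne_zero_of_ne h4.symm)
    (sub_ne_zero_of_ne h2)
end

section
/- For pairwise distinct quaternions A, B, C, the tangent-vector transport identity (C−B) · (V(A,B,C))⁻¹ · (C−B) = V(B,C,A) holds, where V(A,B,C) = (C−B)(C−A)⁻¹(B−A); that is, reflecting the tangent vector at B in the chord from B to C yields the tangent vector at C of the same oriented circle. -/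
/-- Tangent vector at `B` of the oriented circle through `A`, `B`, `C`. -/
noncomputable def tangentVector (A B C : Quaternion ℝ) : Quaternion ℝ :=
  (C - B) * (C - A)⁻¹ * (B - A)

/-! With `x = C - B` and `y = B - A`, so that `C - A = x + y`, both sides of the transport
identity reduce to `x * y⁻¹ * x + x`. -/

theorem mul_inv_mul_add_inv_mul_mul {K : Type*} [DivisionRing K] (x y : K) :
    x * (x * (x + y)⁻¹ * y)⁻¹ * x = (x + y) * y⁻¹ * x := by
  rcases eq_or_ne x 0 with rfl | hx
  · simp
  rcases eq_or_ne y 0 with rfl | hy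
  · simp
  calc x * (x * (x + y)⁻¹ * y)⁻¹ * x = x * y⁻¹ * (x + y) := by
        rw [mul_inv_rev, mul_inv_rev, inv_inv, mul_assoc, mul_assoc, mul_assoc,
          inv_mul_cancel₀ hx, mul_one, ← mul_assoc]
    _ = x * y⁻¹ * x + x := by rw [mul_add, inv_mul_cancel_right₀ hy]
    _ = (x + y) * y⁻¹ * x := by rw [add_mul, add_mul, mul_inv_cancel₀ hy, one_mul]

theorem tangentVector_transport_general
    (A B C : Quaternion ℝ) :
    (C - B) * (tangentVector A B C)⁻¹ * (C - B) = tangentVector B C A := by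
  have hCA : C - A = (C - B) + (B - A) := (sub_add_sub_cancel C B A).symm
  rw [tangentVector, tangentVector, ← neg_sub C A, ← neg_sub B A, inv_neg, neg_mul_neg, hCA]
  exact mul_inv_mul_add_inv_mul_mul (C - B) (B - A)

theorem tangentVector_transport
    (A B C : Quaternion ℝ) (hAB : A ≠ B) (hAC : A ≠ C) (hBC : B ≠ C) :
    (C - B) * (tangentVector A B C)⁻¹ * (C - B) = tangentVector B C A :=
  tangentVector_transport_general A B C
end

section
/- Let Φ₁₂, Φ₁₃, Φ₁₄, Φ₂₃, Φ₂₄, Φ₃₄ be six pairwise distinct quaternions. Define the tangent vectors V¹₁₂ = V(Φ₁₄,Φ₁₂,Φ₁₃), V²₁₂ = V(Φ₁₃,Φ₁₂,Φ₂₃), V⁴₁₂ = V(Φ₂₃,Φ₁₂,Φ₂₄), V⁴₁₃ = V(Φ₃₄,Φ₁₃,Φ₂₃), and the map O₂(X) = (Φ₁₃−Φ₁₂)·(V¹₁₂)⁻¹·X·(V²₁₂)⁻¹·(Φ₁₃−Φ₁₂). Then O₂(V⁴₁₂)·(V⁴₁₃)⁻¹ = −M(Φ₁₃, Φ₁₄,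 Φ₁₂, Φ₂₄, Φ₂₃, Φ₃₄). -/
theorem key1 {K : Type*} [DivisionRing K] {a b : K} (ha : a ≠ 0) (hb : b ≠ 0) :
    a * b⁻¹ * (a + b) * a⁻¹ = (a + b) * b⁻¹ := by
  rw [mul_add, mul_assoc a b⁻¹ b, inv_mul_cancel₀ hb, mul_one, add_mul, add_mul,
    mul_assoc, mul_inv_cancel₀ ha, mul_one, mul_inv_cancel₀ hb]

theorem key2 {K : Type*} [DivisionRing K] {a y : K} (ha : a ≠ 0) (hy : y ≠ 0) :
    y * a⁻¹ * (a + y) * y⁻¹ * a = a + y := by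
  rw [mul_add, mul_assoc y a⁻¹ a, inv_mul_cancel₀ ha, mul_one, add_mul, add_mul,
    mul_inv_cancel₀ hy, one_mul, mul_assoc (y * a⁻¹), mul_inv_cancel₀ hy, mul_one,
    mul_assoc, inv_mul_cancel₀ ha, mul_one, add_comm]

theorem core {K : Type*} [DivisionRing K] (a b y u v p q : K)
    (ha : a ≠ 0) (hb : b ≠ 0) (hy : y ≠ 0) (hu0 : u ≠ 0) (hv : v ≠ 0)
    (hu : u = -(a + y)) :
    a * (a * (a + b)⁻¹ * b)⁻¹ * (p * q⁻¹ * y) * ((-y) * u⁻¹ * (-a))⁻¹ * a *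
        (u * (u + v)⁻¹ * v)⁻¹ =
      (a + b) * b⁻¹ * p * q⁻¹ * (u + v) * v⁻¹ := by
  have h1 : a * (a * (a + b)⁻¹ * b)⁻¹ = (a + b) * b⁻¹ := by
    rw [mul_inv_rev, mul_inv_rev, inv_inv, ← key1 ha hb, mul_assoc, mul_assoc]
  have h2 : y * ((-y) * u⁻¹ * (-a))⁻¹ * a = u := by
    rw [hu]
    simp only [mul_inv_rev, inv_inv, inv_neg, neg_mul, mul_neg, neg_neg, neg_inj,
      ← mul_assoc]
    exact key2 ha hy
  have h3 : u * (u * (u + v)⁻¹ * v)⁻¹ = (u + v) * v⁻¹ := by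
    rw [mul_inv_rev, mul_inv_rev, inv_inv, ← key1 hu0 hv, mul_assoc, mul_assoc]
  calc a * (a * (a + b)⁻¹ * b)⁻¹ * (p * q⁻¹ * y) * ((-y) * u⁻¹ * (-a))⁻¹ * a *
        (u * (u + v)⁻¹ * v)⁻¹
      = (a * (a * (a + b)⁻¹ * b)⁻¹) * (p * (q⁻¹ * ((y * ((-y) * u⁻¹ * (-a))⁻¹ * a) *
          (u * (u + v)⁻¹ * v)⁻¹))) := by simp only [mul_assoc]
    _ = ((a + b) * b⁻¹) * (p * (q⁻¹ * ((u * (u * (u + v)⁻¹ * v)⁻¹)))) := by rw [h1, h2]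
    _ = ((a + b) * b⁻¹) * (p * (q⁻¹ * ((u + v) * v⁻¹))) := by rw [h3]
    _ = (a + b) * b⁻¹ * p * q⁻¹ * (u + v) * v⁻¹ := by simp only [mul_assoc]

theorem O2_transport_eq_neg_multiRatio
    (Φ₁₂ Φ₁₃ Φ₁₄ Φ₂₃ Φ₂₄ Φ₃₄ : Quaternion ℝ)
    (hdist : List.Pairwise (· ≠ ·) [Φ₁₂, Φ₁₃, Φ₁₄, Φ₂₃, Φ₂₄, Φ₃₄]) :
    (Φ₁₃ - Φ₁₂) * (tangentVector Φ₁₄ Φ₁₂ Φ₁₃)⁻¹ * (tangentVector Φ₂₃ Φ₁₂ Φ₂₄) *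
        (tangentVector Φ₁₃ Φ₁₂ Φ₂₃)⁻¹ * (Φ₁₃ - Φ₁₂) *
        (tangentVector Φ₃₄ Φ₁₃ Φ₂₃)⁻¹ =
      -rightMultiRatio Φ₁₃ Φ₁₄ Φ₁₂ Φ₂₄ Φ₂₃ Φ₃₄ := by
  simp at hdist
  obtain ⟨⟨n1213, n1214, n1223, n1224, n1234⟩, ⟨n1314, n1323, n1324, n1334⟩, _⟩ := hdist
  have ha : Φ₁₃ - Φ₁₂ ≠ 0 := sub_ne_zero.mpr (Ne.symm n1213)
  have hb : Φ₁₂ - Φ₁₄ ≠ 0 := sub_ne_zero.mpr n1214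
  have hy : Φ₁₂ - Φ₂₃ ≠ 0 := sub_ne_zero.mpr n1223
  have hu0 : Φ₂₃ - Φ₁₃ ≠ 0 := sub_ne_zero.mpr (Ne.symm n1323)
  have hv : Φ₁₃ - Φ₃₄ ≠ 0 := sub_ne_zero.mpr n1334
  have e1 : Φ₁₃ - Φ₁₄ = (Φ₁₃ - Φ₁₂) + (Φ₁₂ - Φ₁₄) := by abel
  have e2 : Φ₂₃ - Φ₁₂ = -(Φ₁₂ - Φ₂₃) := by abel
  have e3 : Φ₁₂ - Φ₁₃ = -(Φ₁₃ - Φ₁₂) := by abel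
  have e4 : Φ₂₃ - Φ₃₄ = (Φ₂₃ - Φ₁₃) + (Φ₁₃ - Φ₃₄) := by abel
  have e5 : Φ₁₄ - Φ₁₂ = -(Φ₁₂ - Φ₁₄) := by abel
  have e6 : Φ₁₂ - Φ₂₄ = -(Φ₂₄ - Φ₁₂) := by abel
  have e7 : Φ₃₄ - Φ₁₃ = -(Φ₁₃ - Φ₃₄) := by abel
  have hu : Φ₂₃ - Φ₁₃ = -((Φ₁₃ - Φ₁₂) + (Φ₁₂ - Φ₂₃)) := by abel
  simp only [tangentVector, rightMultiRatio]
  rw [e1, e2, e3, e4, e5, e6, e7]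
  rw [core (Φ₁₃ - Φ₁₂) (Φ₁₂ - Φ₁₄) (Φ₁₂ - Φ₂₃) (Φ₂₃ - Φ₁₃) (Φ₁₃ - Φ₃₄)
    (Φ₂₄ - Φ₁₂) (Φ₂₄ - Φ₂₃) ha hb hy hu0 hv hu, ← e1, ← e4]
  simp only [inv_neg, mul_neg, neg_mul, neg_neg]
end

section
/- Let v₁, v₂, v₃ be quaternions with |v₁| = |v₂| = |v₃| = 1. Then both Δ₁ = v₁·v₃⁻¹·v₂ and Δ₂ = v₂·v₃⁻¹·v₁ are unit quaternions solving the linear system: re(Δ·v₂⁻¹) = re(v₁·v₃⁻¹), re(Δ·v₁⁻¹) = re(v₂·v₃⁻¹), and re(Δ·v₁⁻¹·v₃·v₁⁻¹) = re(v₂·v₁⁻¹), where re denotes the real part of a quaternion. -/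
lemma re_mul_comm' (a b : Quaternion ℝ) : (a * b).re = (b * a).re := by
  simp only [Quaternion.re_mul]; ring

theorem delta_solutions_of_linear_system
    (v₁ v₂ v₃ : Quaternion ℝ) (h₁ : ‖v₁‖ = 1) (h₂ : ‖v₂‖ = 1) (h₃ : ‖v₃‖ = 1) :
    (‖v₁ * v₃⁻¹ * v₂‖ = 1 ∧
      ((v₁ * v₃⁻¹ * v₂) * v₂⁻¹).re = (v₁ * v₃⁻¹).re ∧
      ((v₁ * v₃⁻¹ * v₂) * v₁⁻¹).re = (v₂ * v₃⁻¹).re ∧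
      ((v₁ * v₃⁻¹ * v₂) * v₁⁻¹ * v₃ * v₁⁻¹).re = (v₂ * v₁⁻¹).re) ∧
    (‖v₂ * v₃⁻¹ * v₁‖ = 1 ∧
      ((v₂ * v₃⁻¹ * v₁) * v₂⁻¹).re = (v₁ * v₃⁻¹).re ∧
      ((v₂ * v₃⁻¹ * v₁) * v₁⁻¹).re = (v₂ * v₃⁻¹).re ∧
      ((v₂ * v₃⁻¹ * v₁) * v₁⁻¹ * v₃ * v₁⁻¹).re = (v₂ * v₁⁻¹).re) := by
  have n₁ : v₁ ≠ 0 := by intro h; simp [h] at h₁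
  have n₂ : v₂ ≠ 0 := by intro h; simp [h] at h₂
  have n₃ : v₃ ≠ 0 := by intro h; simp [h] at h₃
  have ni : ‖v₃⁻¹‖ = 1 := by rw [norm_inv, h₃]; norm_num
  refine ⟨⟨by simp [norm_mul, h₁, h₂, ni], ?_, ?_, ?_⟩,
          ⟨by simp [norm_mul, h₁, h₂, ni], ?_, ?_, ?_⟩⟩
  · rw [mul_assoc, mul_inv_cancel₀ n₂, mul_one]
  · rw [re_mul_comm', ← mul_assoc, ← mul_assoc, inv_mul_cancel₀ n₁, one_mul, re_mul_comm']
  · rw [re_mul_comm']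
    simp only [← mul_assoc]
    rw [inv_mul_cancel₀ n₁, one_mul, re_mul_comm']
    simp only [← mul_assoc]
    rw [mul_inv_cancel₀ n₃, one_mul]
  · rw [re_mul_comm', ← mul_assoc, ← mul_assoc, inv_mul_cancel₀ n₂, one_mul, re_mul_comm']
  · rw [mul_assoc, mul_inv_cancel₀ n₁, mul_one]
  · rw [mul_assoc (v₂ * v₃⁻¹) v₁ v₁⁻¹, mul_inv_cancel₀ n₁, mul_one,
      mul_assoc v₂, inv_mul_cancel₀ n₃, mul_one]
end

section
/- Let v₁, v₂, v₃ be quaternions with v₃ ≠ 0. If v₁·v₃⁻¹·v₂ = v₂·v₃⁻¹·v₁, then v₁, v₂, v₃ are linearly dependent over ℝ (as elements of the four-dimensional real vector space ℍ). -/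
/-
The imaginary part of a commutator `a * b - b * a` of quaternions is twice the cross product of
the imaginary parts of `a` and `b`. Hence `a = v₁ * v₃⁻¹` and `b = v₂ * v₃⁻¹`, which commute by
hypothesis, have parallel imaginary parts: a nontrivial combination `s • a + t • b` is real, so
`a`, `b`, `1` are dependent, and right multiplication by `v₃` carries this dependence to
`v₁`, `v₂`, `v₃`.
-/

namespace Quaternion

def imVec (a : ℍ[ℝ]) : Fin 3 → ℝ := ![a.imI, a.imJ, a.imK]

theorem imVec_zero : imVec (0 : ℍ[ℝ]) = 0 := by
  ext i; fin_cases i <;> rfl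

theorem imVec_mul_sub_mul (a b : ℍ[ℝ]) :
    imVec (a * b - b * a) = (2 : ℝ) • crossProduct (imVec a) (imVec b) := by
  ext i; fin_cases i <;> simp [imVec, cross_apply] <;> ring

theorem crossProduct_imVec_eq_zero_of_commute {a b : ℍ[ℝ]} (h : Commute a b) :
    crossProduct (imVec a) (imVec b) = 0 := by
  have hcross := imVec_mul_sub_mul a b
  rw [h.eq, sub_self, imVec_zero] at hcross
  exact (smul_eq_zero.mp hcross.symm).resolve_left (two_ne_zero' ℝ)

theorem not_linearIndependent_of_commute {a b : ℍ[ℝ]} (h : Commute a b) :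
    ¬ LinearIndependent ℝ ![a, b, 1] := by
  have hdep : ¬ LinearIndependent ℝ ![imVec a, imVec b] := by
    rw [← crossProduct_ne_zero_iff_linearIndependent, not_not]
    exact crossProduct_imVec_eq_zero_of_commute h
  obtain ⟨s, t, hst, hne⟩ : ∃ s t : ℝ, s • imVec a + t • imVec b = 0 ∧ (s ≠ 0 ∨ t ≠ 0) := by
    rw [LinearIndependent.pair_iff] at hdep
    push Not at hdep
    obtain ⟨s, t, h1, h2⟩ := hdep
    exact ⟨s, t, h1, by tauto⟩
  intro hli
  have hI : s * a.imI + t * b.imI = 0 := by simpa [imVec] using congrFun hst 0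
  have hJ : s * a.imJ + t * b.imJ = 0 := by simpa [imVec] using congrFun hst 1
  have hK : s * a.imK + t * b.imK = 0 := by simpa [imVec] using congrFun hst 2
  have hreal : s • a + t • b + (-(s * a.re + t * b.re)) • (1 : ℍ[ℝ]) = 0 := by
    ext <;> simp [hI, hJ, hK]
  have hzero := Fintype.linearIndependent_iff.mp hli ![s, t, -(s * a.re + t * b.re)]
    (by simpa [Fin.sum_univ_three] using hreal)
  rcases hne with hs | ht
  · exact hs (hzero 0)
  · exact ht (hzero 1)

end Quaternion

theorem linearly_dependent_of_delta_eq
    (v₁ v₂ v₃ : Quaternion ℝ) (h₃ : v₃ ≠ 0)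
    (h : v₁ * v₃⁻¹ * v₂ = v₂ * v₃⁻¹ * v₁) :
    ¬ LinearIndependent ℝ ![v₁, v₂, v₃] := by
  have hcomm : Commute (v₁ * v₃⁻¹) (v₂ * v₃⁻¹) := by
    rw [Commute, SemiconjBy, ← mul_assoc, h, mul_assoc]
  intro hli
  refine Quaternion.not_linearIndependent_of_commute hcomm ?_
  have hli' := hli.map' (LinearMap.mulRight ℝ v₃⁻¹)
    (LinearMap.ker_eq_bot.mpr (mul_left_injective₀ (inv_ne_zero h₃)))
  have hmap : LinearMap.mulRight ℝ v₃⁻¹ ∘ ![v₁, v₂, v₃] = ![v₁ * v₃⁻¹, v₂ * v₃⁻¹, 1] := by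
    funext i; fin_cases i <;> simp [mul_inv_cancel₀ h₃]
  rwa [hmap] at hli'
end

section
/- Let v₁, v₂, v₃ be quaternions with |v₁| = |v₂| = |v₃| = 1, and set Δ₁ = v₁·v₃⁻¹·v₂ and Δ₂ = v₂·v₃⁻¹·v₁. Then the orthogonal projections of Δ₁ and Δ₂ onto each of v₁, v₂, v₃ coincide: ⟨Δ₁, vᵢ⟩ = ⟨Δ₂, vᵢ⟩ for i = 1, 2, 3, where ⟨·,·⟩ is the real inner product on ℍ ≅ ℝ⁴. Equivalently, Δ₁ − Δ₂ is orthogonal to the real span of v₁, v₂, v₃. -/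
/-!
Write `x̄` for `star x`, so that `⟪x, y⟫ = re (x * ȳ)`, `x * x̄ = x̄ * x = ‖x‖²` is real and
`re (x * y) = re (y * x)`. Cycling the trace turns `⟪a c b, a⟫` into `‖a‖² re (c b)` and
`⟪b c a, a⟫` into `‖a‖² re (b c)`, which agree. Against `d` itself, with `d⁻¹` a real multiple of
`d̄`, the two sides are `re ((a d̄) (b d̄))` and `re ((b d̄) (a d̄))`.
-/

open RealInnerProductSpace

namespace Quaternion

theorem re_mul_comm {R : Type*} [CommRing R] (a b : ℍ[R]) : (a * b).re = (b * a).re := by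
  simp only [re_mul]
  ring

theorem inner_mul_mul_self_right (a b c : ℍ) : ⟪a * c * b, a⟫ = ⟪b * c * a, a⟫ := by
  calc ⟪a * c * b, a⟫ = (star a * a * (c * b)).re := by
        rw [inner_def, re_mul_comm, mul_assoc, mul_assoc]
    _ = (b * c * (a * star a)).re := by
        rw [star_mul_self, self_mul_star, coe_mul_eq_smul, mul_coe_eq_smul, re_smul, re_smul,
          re_mul_comm c b]
    _ = ⟪b * c * a, a⟫ := by rw [inner_def, mul_assoc (b * c)]

theorem inner_mul_star_mul_self_right (a b d : ℍ) :
    ⟪a * star d * b, d⟫ = ⟪b * star d * a, d⟫ := by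
  rw [inner_def, inner_def, mul_assoc (a * star d), mul_assoc (b * star d)]
  exact re_mul_comm _ _

theorem inner_mul_inv_mul_self_right (a b d : ℍ) : ⟪a * d⁻¹ * b, d⟫ = ⟪b * d⁻¹ * a, d⟫ := by
  simp only [inv_def, mul_smul_comm, smul_mul_assoc, real_inner_smul_left,
    inner_mul_star_mul_self_right]

end Quaternion

open Quaternion in
theorem delta_projections_coincide_general
    (v₁ v₂ v₃ : Quaternion ℝ) :
    (⟪v₁ * v₃⁻¹ * v₂, v₁⟫ = ⟪v₂ * v₃⁻¹ * v₁, v₁⟫ ∧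
     ⟪v₁ * v₃⁻¹ * v₂, v₂⟫ = ⟪v₂ * v₃⁻¹ * v₁, v₂⟫ ∧
     ⟪v₁ * v₃⁻¹ * v₂, v₃⟫ = ⟪v₂ * v₃⁻¹ * v₁, v₃⟫) ∧
    ∀ w ∈ Submodule.span ℝ ({v₁, v₂, v₃} : Set (Quaternion ℝ)),
      ⟪v₁ * v₃⁻¹ * v₂ - v₂ * v₃⁻¹ * v₁, w⟫ = 0 := by
  have e₁ := inner_mul_mul_self_right v₁ v₂ v₃⁻¹
  have e₂ := (inner_mul_mul_self_right v₂ v₁ v₃⁻¹).symm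
  have e₃ := inner_mul_inv_mul_self_right v₁ v₂ v₃
  have orthogonal_span : Submodule.span ℝ {v₁ * v₃⁻¹ * v₂ - v₂ * v₃⁻¹ * v₁} ⟂
      Submodule.span ℝ {v₁, v₂, v₃} := by
    simp only [Submodule.isOrtho_span, Set.mem_singleton_iff, Set.mem_insert_iff]
    rintro u rfl v (rfl | rfl | rfl) <;> simp only [inner_sub_left, e₁, e₂, e₃, sub_self]
  exact ⟨⟨e₁, e₂, e₃⟩, fun w hw ↦ orthogonal_span.inner_eq (Submodule.mem_span_singleton_self _) hw⟩

theorem delta_projections_coincide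
    (v₁ v₂ v₃ : Quaternion ℝ) (h₁ : ‖v₁‖ = 1) (h₂ : ‖v₂‖ = 1) (h₃ : ‖v₃‖ = 1) :
    (⟪v₁ * v₃⁻¹ * v₂, v₁⟫ = ⟪v₂ * v₃⁻¹ * v₁, v₁⟫ ∧
     ⟪v₁ * v₃⁻¹ * v₂, v₂⟫ = ⟪v₂ * v₃⁻¹ * v₁, v₂⟫ ∧
     ⟪v₁ * v₃⁻¹ * v₂, v₃⟫ = ⟪v₂ * v₃⁻¹ * v₁, v₃⟫) ∧
    ∀ w ∈ Submodule.span ℝ ({v₁, v₂, v₃} : Set (Quaternion ℝ)),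
      ⟪v₁ * v₃⁻¹ * v₂ - v₂ * v₃⁻¹ * v₁, w⟫ = 0 :=
  delta_projections_coincide_general v₁ v₂ v₃
end

section
/- Let P₁, P₂, P₃, P₄ be pairwise distinct quaternions and let Q(P₁,P₂,P₃,P₄) = (P₁−P₂)(P₂−P₃)⁻¹(P₃−P₄)(P₄−P₁)⁻¹ be their quaternionic cross-ratio. Then Q(P₁,P₂,P₃,P₄) is real (i.e., equal to r·1 for some r ∈ ℝ) if and only if the four points P₁, P₂, P₃, P₄, regarded as points of the Euclidean space ℍ ≅ ℝ⁴, are collinear or concyclic (cospherical and coplanar, i.e., they lie on a common circle in some two-dimensional affine subspace). -/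
/-- Quaternionic cross-ratio of four points. -/
noncomputable def crossRatio (P₁ P₂ P₃ P₄ : Quaternion ℝ) : Quaternion ℝ :=
  (P₁ - P₂) * (P₂ - P₃)⁻¹ * (P₃ - P₄) * (P₄ - P₁)⁻¹

/-!
Normalise so that `P₂ ↦ 0` and `P₃ ↦ 1` by `P ↦ (P - P₂) (P₃ - P₂)⁻¹`; right multiplication and
translation do not change the cross-ratio. Either side of the equivalence forces the normalised
points into one commutative plane `ℝ + ℝ v` with `v² = -1`: for real cross-ratio, `P₄` is a rational
function of `P₁` with real coefficients; for concyclic or collinear points, coplanarity does it.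
That plane is an isometric copy of `ℂ` on which the quaternionic cross-ratio is the complex one, and
in `ℂ` the cross-ratio is real iff the inscribed angles at `P₂` and `P₄` agree mod `π`, which is the
inscribed angle theorem and its converse.
-/

open EuclideanGeometry Module Submodule Quaternion ComplexConjugate

universe u₁ u₂

section AffineImage

variable {k : Type*} {V₁ : Type u₁} {V₂ : Type u₂} {P₁ P₂ : Type*} [Field k] [AddCommGroup V₁]
  [Module k V₁] [AddTorsor V₁ P₁] [AddCommGroup V₂] [Module k V₂] [AddTorsor V₂ P₂]
  {f : P₁ →ᵃ[k] P₂}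

theorem AffineMap.lift_rank_vectorSpan_image (hf : Function.Injective f) (s : Set P₁) :
    Cardinal.lift.{u₁} (Module.rank k (vectorSpan k (f '' s))) =
      Cardinal.lift.{u₂} (Module.rank k (vectorSpan k s)) := by
  rw [← f.map_vectorSpan]
  exact (Submodule.equivMapOfInjective _ (f.linear_injective_iff.2 hf) _).lift_rank_eq.symm

theorem AffineMap.collinear_image_iff (hf : Function.Injective f) {s : Set P₁} :
    Collinear k (f '' s) ↔ Collinear k s := by
  rw [Collinear, Collinear, ← Cardinal.lift_le_one_iff.{_, u₁}, f.lift_rank_vectorSpan_image hf,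
    Cardinal.lift_le_one_iff]

theorem AffineMap.coplanar_image_iff (hf : Function.Injective f) {s : Set P₁} :
    Coplanar k (f '' s) ↔ Coplanar k s := by
  rw [Coplanar, Coplanar, ← Cardinal.lift_le_ofNat_iff.{_, u₁}, f.lift_rank_vectorSpan_image hf,
    Cardinal.lift_le_ofNat_iff]

end AffineImage

section AffineIsometryImage

variable {V₁ P₁ V₂ P₂ : Type*} [NormedAddCommGroup V₁] [NormedSpace ℝ V₁] [MetricSpace P₁]
  [NormedAddTorsor V₁ P₁] [NormedAddCommGroup V₂] [InnerProductSpace ℝ V₂] [MetricSpace P₂]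
  [NormedAddTorsor V₂ P₂] [FiniteDimensional ℝ V₁]

theorem AffineIsometry.cospherical_image_iff (f : P₁ →ᵃⁱ[ℝ] P₂) {s : Set P₁} :
    Cospherical (f '' s) ↔ Cospherical s := by
  refine ⟨fun ⟨c, r, hc⟩ => ?_, Isometry.cospherical f.isometry⟩
  rcases s.eq_empty_or_nonempty with rfl | ⟨p₀, hp₀⟩
  · exact ⟨Classical.arbitrary _, 0, by simp⟩
  -- the foot of the perpendicular from `c` to the range of `f` is a centre in that range
  let A : AffineSubspace ℝ P₂ := (⊤ : AffineSubspace ℝ P₁).map f.toAffineMap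
  have hA : ∀ p, f p ∈ A := fun p => ⟨p, trivial, rfl⟩
  have : Nonempty A := ⟨⟨f p₀, hA p₀⟩⟩
  obtain ⟨q, -, hq⟩ := (orthogonalProjection A c).2
  refine ⟨q, dist p₀ q, fun p hp => ?_⟩
  rw [← f.dist_map, ← f.dist_map]
  simp only [AffineIsometry.coe_toAffineMap] at hq
  rw [hq]
  exact (dist_eq_iff_dist_orthogonalProjection_eq c (hA p) (hA p₀)).1
    ((hc _ ⟨p, hp, rfl⟩).trans (hc _ ⟨p₀, hp₀, rfl⟩).symm)

theorem AffineIsometry.concyclic_image_iff (f : P₁ →ᵃⁱ[ℝ] P₂) {s : Set P₁} :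
    Concyclic (f '' s) ↔ Concyclic s := by
  have hcop := f.toAffineMap.coplanar_image_iff (s := s) f.injective
  exact ⟨fun ⟨h₁, h₂⟩ => ⟨f.cospherical_image_iff.1 h₁, hcop.1 h₂⟩,
    fun ⟨h₁, h₂⟩ => ⟨f.cospherical_image_iff.2 h₁, hcop.2 h₂⟩⟩

end AffineIsometryImage

namespace Complex

noncomputable def crossRatio (z₁ z₂ z₃ z₄ : ℂ) : ℂ :=
  (z₁ - z₂) * (z₂ - z₃)⁻¹ * (z₃ - z₄) * (z₄ - z₁)⁻¹

theorem two_zsmul_coe_arg_eq_zero_iff (z : ℂ) : (2 : ℤ) • (arg z : Real.Angle) = 0 ↔ z.im = 0 := by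
  rw [Real.Angle.two_zsmul_eq_zero_iff, arg_coe_angle_eq_iff_eq_toReal,
    arg_coe_angle_eq_iff_eq_toReal, Real.Angle.toReal_zero, Real.Angle.toReal_pi, arg_eq_zero_iff,
    arg_eq_pi_iff]
  refine ⟨fun h => h.elim And.right And.right, fun h => ?_⟩
  rcases le_or_gt 0 z.re with h' | h'
  exacts [Or.inl ⟨h', h⟩, Or.inr ⟨h', h⟩]

section Oriented

attribute [local instance] finrank_real_complex_fact

noncomputable instance : Module.Oriented ℝ ℂ (Fin 2) := ⟨Complex.orientation⟩

theorem oangle_eq_arg (z₁ z₂ z₃ : ℂ) : ∡ z₁ z₂ z₃ = arg (conj (z₁ - z₂) * (z₃ - z₂)) :=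
  Complex.oangle _ _

theorem two_zsmul_oangle_eq_iff_crossRatio_im_eq_zero {z₁ z₂ z₃ z₄ : ℂ} (h₁₂ : z₁ ≠ z₂)
    (h₂₃ : z₂ ≠ z₃) (h₃₄ : z₃ ≠ z₄) (h₄₁ : z₄ ≠ z₁) :
    (2 : ℤ) • ∡ z₃ z₂ z₁ = (2 : ℤ) • ∡ z₃ z₄ z₁ ↔ (crossRatio z₁ z₂ z₃ z₄).im = 0 := by
  have h₁₂' := sub_ne_zero.2 h₁₂
  have h₂₃' := sub_ne_zero.2 h₂₃
  have h₃₂ := sub_ne_zero.2 h₂₃.symm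
  have h₃₄' := sub_ne_zero.2 h₃₄
  have h₄₁' := sub_ne_zero.2 h₄₁
  have h₁₄ := sub_ne_zero.2 h₄₁.symm
  have hpos : 0 < normSq (z₃ - z₂) / normSq (z₃ - z₄) :=
    div_pos (normSq_pos.2 h₃₂) (normSq_pos.2 h₃₄')
  have conj_eq (w : ℂ) (hw : w ≠ 0) : conj w = normSq w * w⁻¹ := by
    rw [← mul_conj]; field_simp
  have hquot : conj (z₃ - z₂) * (z₁ - z₂) / (conj (z₃ - z₄) * (z₁ - z₄))
      = crossRatio z₁ z₂ z₃ z₄ * ↑(normSq (z₃ - z₂) / normSq (z₃ - z₄)) := by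
    rw [conj_eq _ h₃₂, conj_eq _ h₃₄', crossRatio]
    push_cast
    field_simp
    ring
  rw [← sub_eq_zero, ← smul_sub, oangle_eq_arg, oangle_eq_arg,
    ← arg_div_coe_angle (mul_ne_zero ((map_ne_zero _).2 h₃₂) h₁₂')
      (mul_ne_zero ((map_ne_zero _).2 h₃₄') h₁₄), hquot, arg_mul_real hpos,
    two_zsmul_coe_arg_eq_zero_iff]

theorem crossRatio_im_eq_zero_iff {z₁ z₂ z₃ z₄ : ℂ} (h₁₂ : z₁ ≠ z₂) (h₂₃ : z₂ ≠ z₃)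
    (h₃₄ : z₃ ≠ z₄) (h₄₁ : z₄ ≠ z₁) :
    (crossRatio z₁ z₂ z₃ z₄).im = 0 ↔
      Collinear ℝ ({z₁, z₂, z₃, z₄} : Set ℂ) ∨ Concyclic ({z₁, z₂, z₃, z₄} : Set ℂ) := by
  have hperm : ({z₃, z₂, z₄, z₁} : Set ℂ) = {z₁, z₂, z₃, z₄} := by
    ext; simp only [Set.mem_insert_iff, Set.mem_singleton_iff]; tauto
  rw [← two_zsmul_oangle_eq_iff_crossRatio_im_eq_zero h₁₂ h₂₃ h₃₄ h₄₁, ← hperm]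
  refine ⟨fun h => (concyclic_or_collinear_of_two_zsmul_oangle_eq h).symm, ?_⟩
  rintro (hcol | hcyc)
  · have h₀ {p₁ p₂ p₃ : ℂ} (h : Collinear ℝ ({p₁, p₂, p₃} : Set ℂ)) :
        (2 : ℤ) • ∡ p₁ p₂ p₃ = 0 :=
      Real.Angle.two_zsmul_eq_zero_iff.2 (oangle_eq_zero_or_eq_pi_iff_collinear.2 h)
    open Set in
    rw [h₀ (hcol.subset (insert_subset_insert (insert_subset_insert (subset_insert _ _)))),
      h₀ (hcol.subset (insert_subset_insert (subset_insert _ _)))]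
  · exact hcyc.Cospherical.two_zsmul_oangle_eq h₂₃ h₁₂.symm h₃₄.symm h₄₁

end Oriented

end Complex

theorem crossRatio_mul_right_add (P₁ P₂ P₃ P₄ : ℍ) {u : ℍ} (hu : u ≠ 0) (p : ℍ) :
    crossRatio (P₁ * u + p) (P₂ * u + p) (P₃ * u + p) (P₄ * u + p) = crossRatio P₁ P₂ P₃ P₄ := by
  simp only [crossRatio, add_sub_add_right_eq_sub, ← sub_mul, mul_inv_rev, mul_assoc,
    mul_inv_cancel_left₀ hu]

namespace Quaternion

section liftAux

variable {v : ℍ} (hv : v * v = -1)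

include hv in
theorem star_eq_neg_of_mul_self_eq_neg_one : star v = -v := by
  have hv0 : v ≠ 0 := by rintro rfl; simp at hv
  have hn : normSq v = 1 := by
    have h := congrArg normSq hv
    rw [map_mul, normSq_neg, map_one] at h
    nlinarith [normSq_nonneg (a := v)]
  apply mul_left_cancel₀ hv0
  rw [self_mul_star, hn, mul_neg, hv, neg_neg, coe_one]

theorem liftAux_ofReal (r : ℝ) : Complex.liftAux v hv r = r := by
  rw [← Complex.coe_algebraMap, AlgHom.commutes, algebraMap_def]

theorem star_liftAux (z : ℂ) : star (Complex.liftAux v hv z) = Complex.liftAux v hv (conj z) := by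
  simp [Complex.liftAux_apply, star_eq_neg_of_mul_self_eq_neg_one hv, algebraMap_def]

theorem norm_liftAux (z : ℂ) : ‖Complex.liftAux v hv z‖ = ‖z‖ := by
  have hnormSq : normSq (Complex.liftAux v hv z) = Complex.normSq z := by
    apply coe_injective
    rw [← self_mul_star, star_liftAux, ← map_mul, Complex.mul_conj, liftAux_ofReal]
  rw [← sq_eq_sq₀ (norm_nonneg _) (norm_nonneg _), sq, ← normSq_eq_norm_mul_self, hnormSq,
    Complex.normSq_eq_norm_sq]

theorem exists_liftAux_eq_coe_iff (z : ℂ) :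
    (∃ r : ℝ, Complex.liftAux v hv z = r) ↔ z.im = 0 := by
  have hinj : Function.Injective (Complex.liftAux v hv) :=
    (Complex.liftAux v hv).toRingHom.injective
  simp_rw [← liftAux_ofReal hv, hinj.eq_iff]
  exact Complex.conj_eq_iff_real.symm.trans Complex.conj_eq_iff_im

theorem crossRatio_liftAux (z₁ z₂ z₃ z₄ : ℂ) :
    crossRatio (Complex.liftAux v hv z₁) (Complex.liftAux v hv z₂) (Complex.liftAux v hv z₃)
      (Complex.liftAux v hv z₄) = Complex.liftAux v hv (Complex.crossRatio z₁ z₂ z₃ z₄) := by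
  simp only [crossRatio, Complex.crossRatio, map_mul, map_sub, map_inv₀]

noncomputable def planeIsometry (u p : ℍ) (hu : ‖u‖ = 1) : ℂ →ᵃⁱ[ℝ] ℍ :=
  (AffineIsometryEquiv.vaddConst ℝ p).toAffineIsometry.comp
    ({ toLinearMap := (LinearMap.mulRight ℝ u).comp (Complex.liftAux v hv).toLinearMap
       norm_map' z := by
         rw [LinearMap.comp_apply, LinearMap.mulRight_apply, norm_mul, hu, mul_one]
         exact norm_liftAux hv z } : ℂ →ₗᵢ[ℝ] ℍ).toAffineIsometry

theorem planeIsometry_apply (u p : ℍ) (hu : ‖u‖ = 1) (z : ℂ) :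
    planeIsometry hv u p hu z = Complex.liftAux v hv z * u + p := rfl

theorem crossRatio_planeIsometry (u p : ℍ) (hu : ‖u‖ = 1) (z₁ z₂ z₃ z₄ : ℂ) :
    crossRatio (planeIsometry hv u p hu z₁) (planeIsometry hv u p hu z₂)
      (planeIsometry hv u p hu z₃) (planeIsometry hv u p hu z₄) =
      Complex.liftAux v hv (Complex.crossRatio z₁ z₂ z₃ z₄) := by
  simp only [planeIsometry_apply]
  rw [crossRatio_mul_right_add _ _ _ _ (norm_ne_zero_iff.1 (hu ▸ one_ne_zero)), crossRatio_liftAux]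

theorem crossRatio_real_iff_of_subset_range {u p : ℍ} {hu : ‖u‖ = 1} {P₁ P₂ P₃ P₄ : ℍ}
    (hs : {P₁, P₂, P₃, P₄} ⊆ Set.range (planeIsometry hv u p hu)) (h₁₂ : P₁ ≠ P₂)
    (h₂₃ : P₂ ≠ P₃) (h₃₄ : P₃ ≠ P₄) (h₄₁ : P₄ ≠ P₁) :
    (∃ r : ℝ, crossRatio P₁ P₂ P₃ P₄ = r) ↔
      Collinear ℝ ({P₁, P₂, P₃, P₄} : Set ℍ) ∨ Concyclic ({P₁, P₂, P₃, P₄} : Set ℍ) := by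
  set f := planeIsometry hv u p hu
  simp only [Set.insert_subset_iff, Set.singleton_subset_iff] at hs
  obtain ⟨⟨z₁, rfl⟩, ⟨z₂, rfl⟩, ⟨z₃, rfl⟩, ⟨z₄, rfl⟩⟩ := hs
  have himage : ({f z₁, f z₂, f z₃, f z₄} : Set ℍ) = f '' {z₁, z₂, z₃, z₄} := by
    simp only [Set.image_insert_eq, Set.image_singleton]
  rw [crossRatio_planeIsometry, exists_liftAux_eq_coe_iff,
    Complex.crossRatio_im_eq_zero_iff (ne_of_apply_ne f h₁₂) (ne_of_apply_ne f h₂₃)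
      (ne_of_apply_ne f h₃₄) (ne_of_apply_ne f h₄₁),
    himage, f.concyclic_image_iff, ← f.coe_toAffineMap,
    f.toAffineMap.collinear_image_iff f.injective]

theorem mem_range_of_crossRatio_eq_coe {y γ : ℍ} {r : ℝ} (hy₀ : y ≠ 0) (hy₁ : y ≠ 1)
    (hγ : γ ≠ y) (hr : crossRatio y 0 1 γ = r) (hy : y ∈ (Complex.liftAux v hv).range) :
    γ ∈ (Complex.liftAux v hv).range := by
  -- `γ = (y - r)⁻¹ (1 - r) y` is a rational function of `y` with real coefficients
  have hlin : (y - r) * γ = (1 - r) * y := by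
    have h : y * (1 - γ) = -r * (γ - y) := by
      simp only [crossRatio, sub_zero, zero_sub, inv_neg, inv_one, mul_neg, mul_one, neg_mul,
        neg_eq_iff_eq_neg] at hr
      rw [← hr, inv_mul_cancel_right₀ (sub_ne_zero.2 hγ)]
    rw [← sub_eq_zero, ← neg_eq_zero, show -((y - r) * γ - (1 - r) * y) =
      y * (1 - γ) - -r * (γ - y) by noncomm_ring, h, sub_self]
  have hyr : y - r ≠ 0 := by
    intro h
    rw [h, zero_mul, eq_comm, mul_eq_zero, sub_eq_zero, ← sub_eq_zero.1 h] at hlin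
    exact hlin.elim (fun h1 => hy₁ h1.symm) hy₀
  obtain ⟨ζ, rfl⟩ := (AlgHom.mem_range _).1 hy
  refine (AlgHom.mem_range _).2 ⟨(ζ - r)⁻¹ * ((1 - r) * ζ), ?_⟩
  rw [map_mul, map_inv₀, map_sub, map_mul, map_sub, map_one, liftAux_ofReal,
    inv_mul_eq_iff_eq_mul₀ hyr, hlin]

theorem subset_range_planeIsometry {s : Set ℍ} {p b : ℍ} (hb : b ≠ 0)
    (hs : ∀ P ∈ s, (P - p) * b⁻¹ ∈ (Complex.liftAux v hv).range) :
    s ⊆ Set.range (planeIsometry hv (‖b‖⁻¹ • b) p (by simp [norm_smul, hb])) := by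
  intro P hP
  obtain ⟨z, hz⟩ := (AlgHom.mem_range _).1 (hs P hP)
  refine ⟨z * ‖b‖, ?_⟩
  rw [planeIsometry_apply, map_mul, hz, liftAux_ofReal, mul_smul_comm, mul_coe_eq_smul,
    smul_mul_assoc, smul_smul, inv_mul_cancel₀ (norm_ne_zero_iff.2 hb), one_smul,
    inv_mul_cancel_right₀ hb, sub_add_cancel]

end liftAux

theorem exists_mem_range_liftAux (y : ℍ) :
    ∃ (v : ℍ) (hv : v * v = -1), y ∈ (Complex.liftAux v hv).range := by
  by_cases hy : y.im = 0
  · refine ⟨ofComplex Complex.I, by rw [← map_mul, Complex.I_mul_I, map_neg, map_one], ?_⟩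
    rw [← re_add_im y, hy, add_zero, ← algebraMap_def]
    exact Subalgebra.algebraMap_mem _ _
  · have hn : ‖y.im‖ ≠ 0 := norm_ne_zero_iff.2 hy
    refine ⟨‖y.im‖⁻¹ • y.im, ?_, (AlgHom.mem_range _).2 ⟨⟨y.re, ‖y.im‖⟩, ?_⟩⟩
    · have h : ‖y.im‖⁻¹ * ‖y.im‖⁻¹ * (‖y.im‖ * ‖y.im‖) = 1 := by field_simp
      rw [smul_mul_smul_comm, ← sq y.im, im_sq, normSq_eq_norm_mul_self, smul_neg, smul_coe, h,
        coe_one]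
    · rw [Complex.liftAux_apply, smul_smul, mul_inv_cancel₀ hn, one_smul, algebraMap_def,
        re_add_im]

theorem exists_le_range_liftAux {W : Submodule ℝ ℍ} (hW : finrank ℝ W ≤ 2) (h1 : (1 : ℍ) ∈ W) :
    ∃ (v : ℍ) (hv : v * v = -1), W ≤ Subalgebra.toSubmodule (Complex.liftAux v hv).range := by
  by_cases h : W ≤ span ℝ {1}
  · obtain ⟨v, hv, -⟩ := exists_mem_range_liftAux 1
    exact ⟨v, hv, h.trans <| span_le.2 <|
      Set.singleton_subset_iff.2 (one_mem (Complex.liftAux v hv).range)⟩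
  obtain ⟨y, hyW, hy⟩ := SetLike.not_le_iff_exists.1 h
  obtain ⟨v, hv, hyv⟩ := exists_mem_range_liftAux y
  have hlt : span ℝ {1} < span ℝ {1, y} :=
    lt_of_le_of_ne (span_mono (by simp)) fun h => hy (h ▸ subset_span (by simp))
  have h2 := finrank_lt_finrank_of_lt hlt
  rw [finrank_span_singleton one_ne_zero] at h2
  have hspan : span ℝ {1, y} = W :=
    eq_of_le_of_finrank_le (span_le.2 (by simp [Set.insert_subset_iff, h1, hyW])) (by omega)
  exact ⟨v, hv, hspan ▸ span_le.2 (Set.pair_subset (one_mem (Complex.liftAux v hv).range) hyv)⟩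

theorem exists_planeIsometry_of_coplanar {s : Set ℍ} (hs : Coplanar ℝ s) {p q : ℍ} (hp : p ∈ s)
    (hq : q ∈ s) (hpq : p ≠ q) :
    ∃ (v : ℍ) (hv : v * v = -1) (u o : ℍ) (hu : ‖u‖ = 1),
      s ⊆ Set.range (planeIsometry hv u o hu) := by
  have hb : q - p ≠ 0 := sub_ne_zero.2 hpq.symm
  obtain ⟨v, hv, hW⟩ := exists_le_range_liftAux
    (W := (vectorSpan ℝ s).map (LinearMap.mulRight ℝ (q - p)⁻¹))
    ((finrank_map_le _ _).trans (coplanar_iff_finrank_le_two.1 hs))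
    ⟨q - p, vsub_mem_vectorSpan ℝ hq hp, mul_inv_cancel₀ hb⟩
  exact ⟨v, hv, _, _, _,
    subset_range_planeIsometry hv hb fun P hP => hW ⟨P - p, vsub_mem_vectorSpan ℝ hP hp, rfl⟩⟩

theorem exists_planeIsometry_of_crossRatio_eq_coe {P₁ P₂ P₃ P₄ : ℍ} {r : ℝ} (h₁₂ : P₁ ≠ P₂)
    (h₁₃ : P₁ ≠ P₃) (h₂₃ : P₂ ≠ P₃) (h₄₁ : P₄ ≠ P₁) (hr : crossRatio P₁ P₂ P₃ P₄ = r) :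
    ∃ (v : ℍ) (hv : v * v = -1) (u o : ℍ) (hu : ‖u‖ = 1),
      {P₁, P₂, P₃, P₄} ⊆ Set.range (planeIsometry hv u o hu) := by
  set b := P₃ - P₂
  have hb : b ≠ 0 := sub_ne_zero.2 h₂₃.symm
  have hnorm (P : ℍ) : (P - P₂) * b⁻¹ * b + P₂ = P := by
    rw [inv_mul_cancel_right₀ hb, sub_add_cancel]
  have hinj {P P' : ℍ} (h : P ≠ P') : (P - P₂) * b⁻¹ ≠ (P' - P₂) * b⁻¹ :=
    fun h' => h (by rw [← hnorm P, h', hnorm])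
  have h₃ : (P₃ - P₂) * b⁻¹ = 1 := mul_inv_cancel₀ hb
  have h₂ : (P₂ - P₂) * b⁻¹ = 0 := by rw [sub_self, zero_mul]
  have hr' : crossRatio ((P₁ - P₂) * b⁻¹) 0 1 ((P₄ - P₂) * b⁻¹) = r := by
    rw [← crossRatio_mul_right_add _ _ _ _ hb P₂, ← h₂, ← h₃, hnorm, hnorm, hnorm, hnorm, hr]
  obtain ⟨v, hv, hy⟩ := exists_mem_range_liftAux ((P₁ - P₂) * b⁻¹)
  have hγ := mem_range_of_crossRatio_eq_coe hv (h₂ ▸ hinj h₁₂) (h₃ ▸ hinj h₁₃) (hinj h₄₁) hr' hy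
  refine ⟨v, hv, _, P₂, _, subset_range_planeIsometry hv hb ?_⟩
  rintro P (rfl | rfl | rfl | rfl)
  exacts [hy, h₂ ▸ zero_mem _, h₃ ▸ one_mem _, hγ]

end Quaternion

theorem crossRatio_real_iff_collinear_or_concyclic
    (P₁ P₂ P₃ P₄ : Quaternion ℝ)
    (hdist : List.Pairwise (· ≠ ·) [P₁, P₂, P₃, P₄]) :
    (∃ r : ℝ, crossRatio P₁ P₂ P₃ P₄ = (r : Quaternion ℝ)) ↔
      (Collinear ℝ ({P₁, P₂, P₃, P₄} : Set (Quaternion ℝ)) ∨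
        EuclideanGeometry.Concyclic ({P₁, P₂, P₃, P₄} : Set (Quaternion ℝ))) := by
  obtain ⟨⟨h₁₂, h₁₃, h₁₄⟩, ⟨h₂₃, -⟩, h₃₄⟩ :
      (P₁ ≠ P₂ ∧ P₁ ≠ P₃ ∧ P₁ ≠ P₄) ∧ (P₂ ≠ P₃ ∧ P₂ ≠ P₄) ∧ P₃ ≠ P₄ := by
    simpa using hdist
  constructor
  · rintro ⟨r, hr⟩
    obtain ⟨v, hv, u, o, hu, hs⟩ :=
      exists_planeIsometry_of_crossRatio_eq_coe h₁₂ h₁₃ h₂₃ h₁₄.symm hr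
    exact (crossRatio_real_iff_of_subset_range hv hs h₁₂ h₂₃ h₃₄ h₁₄.symm).1 ⟨r, hr⟩
  · intro h
    obtain ⟨v, hv, u, o, hu, hs⟩ := exists_planeIsometry_of_coplanar
      (h.elim Collinear.coplanar Concyclic.Coplanar) (by simp : P₂ ∈ _) (by simp : P₃ ∈ _) h₂₃
    exact (crossRatio_real_iff_of_subset_range hv hs h₁₂ h₂₃ h₃₄ h₁₄.symm).2 h
end

section
/- Let Φ₁₂, Φ₁₃, Φ₁₄, Φ₂₃, Φ₂₄ be five pairwise distinct quaternions that affinely span ℍ ≅ ℝ⁴ and that all lie on the hypersphere of centre c ∈ ℍ and radius r > 0. Suppose Φ₃₄ and Φ̃₃₄ are quaternions, each distinct from the five given points and with Φ₃₄ ≠ c, such that M(Φ₁₄, Φ₁₂, Φ₂₄, Φ₂₃, Φ₃₄, Φ₁₃) = −1 and M̃(Φ₁₄, Φ₁₂, Φ₂₄, Φ₂₃, Φ̃₃₄, Φ₁₃) = −1. Then Φ̃₃₄ is the inverse of Φ₃₄ with respect to that hypersphere: Φ̃₃₄ = c + (r²/‖Φ₃₄ − c‖²)·(Φ₃₄ −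 c). -/
theorem inv_sub_inv_eq_mul_sub_mul {K : Type*} [DivisionRing K] {a b : K} (ha : a ≠ 0)
    (hb : b ≠ 0) : a⁻¹ - b⁻¹ = b⁻¹ * (b - a) * a⁻¹ := by
  rw [mul_sub, sub_mul, inv_mul_cancel₀ hb, one_mul, mul_assoc, mul_inv_cancel₀ ha, mul_one]

theorem eq_of_sub_mul_inv_sub_eq {K : Type*} [DivisionRing K] {d e x y : K} (he : e ≠ d)
    (hx : x ≠ d) (hy : y ≠ d) (h : (e - x) * (x - d)⁻¹ = (e - y) * (y - d)⁻¹) : x = y := by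
  have expand : ∀ z, z ≠ d → (e - z) * (z - d)⁻¹ = (e - d) * (z - d)⁻¹ - 1 := fun z hz => by
    rw [← sub_sub_sub_cancel_right e z d, sub_mul, mul_inv_cancel₀ (sub_ne_zero.2 hz)]
  rw [expand x hx, expand y hy, sub_left_inj] at h
  simpa using mul_left_cancel₀ (sub_ne_zero.2 he) h

open Quaternion

section MultiRatio

variable (P₁ P₂ P₃ P₄ P₅ P₆ : ℍ[ℝ])

theorem leftMultiRatio_eq_reversed : leftMultiRatio P₁ P₂ P₃ P₄ P₅ P₆ =
    (P₆ - P₁)⁻¹ * (P₅ - P₆) * (P₄ - P₅)⁻¹ * (P₃ - P₄) * (P₂ - P₃)⁻¹ * (P₁ - P₂) := by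
  rw [leftMultiRatio, ← neg_sub P₆ P₁, ← neg_sub P₅ P₆, ← neg_sub P₄ P₅, ← neg_sub P₃ P₄,
    ← neg_sub P₂ P₃, ← neg_sub P₁ P₂]
  simp only [inv_neg, neg_mul, mul_neg, neg_neg]

theorem star_rightMultiRatio :
    star (rightMultiRatio P₁ P₂ P₃ P₄ P₅ P₆) =
      leftMultiRatio (star P₁) (star P₂) (star P₃) (star P₄) (star P₅) (star P₆) := by
  simp only [rightMultiRatio, leftMultiRatio_eq_reversed, star_mul, star_inv₀, star_sub, mul_assoc]

theorem leftMultiRatio_add_left (a : ℍ[ℝ]) :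
    leftMultiRatio (a + P₁) (a + P₂) (a + P₃) (a + P₄) (a + P₅) (a + P₆) =
      leftMultiRatio P₁ P₂ P₃ P₄ P₅ P₆ := by
  simp only [leftMultiRatio, add_sub_add_left_eq_sub]

theorem leftMultiRatio_sub_right (a : ℍ[ℝ]) :
    leftMultiRatio (P₁ - a) (P₂ - a) (P₃ - a) (P₄ - a) (P₅ - a) (P₆ - a) =
      leftMultiRatio P₁ P₂ P₃ P₄ P₅ P₆ := by
  simp only [leftMultiRatio, sub_sub_sub_cancel_right]

theorem leftMultiRatio_mul_left {a : ℍ[ℝ]} (ha : a ≠ 0) :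
    leftMultiRatio (a * P₁) (a * P₂) (a * P₃) (a * P₄) (a * P₅) (a * P₆) =
      leftMultiRatio P₁ P₂ P₃ P₄ P₅ P₆ := by
  simp only [leftMultiRatio, ← mul_sub, mul_inv_rev, mul_assoc, inv_mul_cancel_left₀ ha]

variable {P₁ P₂ P₃ P₄ P₅ P₆}

theorem leftMultiRatio_inv (h₁ : P₁ ≠ 0) (h₂ : P₂ ≠ 0) (h₃ : P₃ ≠ 0) (h₄ : P₄ ≠ 0)
    (h₅ : P₅ ≠ 0) (h₆ : P₆ ≠ 0) :
    leftMultiRatio P₁⁻¹ P₂⁻¹ P₃⁻¹ P₄⁻¹ P₅⁻¹ P₆⁻¹ =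
      P₁ * leftMultiRatio P₁ P₂ P₃ P₄ P₅ P₆ * P₁⁻¹ := by
  rw [leftMultiRatio, leftMultiRatio_eq_reversed, inv_sub_inv_eq_mul_sub_mul h₁ h₆,
    inv_sub_inv' h₆ h₅, inv_sub_inv_eq_mul_sub_mul h₅ h₄, inv_sub_inv' h₄ h₃,
    inv_sub_inv_eq_mul_sub_mul h₃ h₂, inv_sub_inv' h₂ h₁]
  simp only [mul_inv_rev, inv_inv, mul_assoc, mul_inv_cancel_left₀ h₆, inv_mul_cancel_left₀ h₅,
    mul_inv_cancel_left₀ h₄, inv_mul_cancel_left₀ h₃, mul_inv_cancel_left₀ h₂]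

theorem eq_of_leftMultiRatio_eq {X Y m : ℍ[ℝ]} (h₁₆ : P₁ ≠ P₆) (h₂₁ : P₂ ≠ P₁) (h₃₂ : P₃ ≠ P₂)
    (h₄₃ : P₄ ≠ P₃) (h₆₄ : P₆ ≠ P₄) (hm : m ≠ 0)
    (hX : leftMultiRatio P₁ P₂ P₃ P₄ X P₆ = m) (hY : leftMultiRatio P₁ P₂ P₃ P₄ Y P₆ = m) :
    X = Y := by
  set a := (P₁ - P₆)⁻¹
  set b := (P₄ - P₃) * (P₃ - P₂)⁻¹ * (P₂ - P₁)
  have ha : a ≠ 0 := inv_ne_zero (sub_ne_zero.2 h₁₆)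
  have hb : b ≠ 0 := mul_ne_zero (mul_ne_zero (sub_ne_zero.2 h₄₃)
    (inv_ne_zero (sub_ne_zero.2 h₃₂))) (sub_ne_zero.2 h₂₁)
  have factor : ∀ Z, leftMultiRatio P₁ P₂ P₃ P₄ Z P₆ = a * ((P₆ - Z) * (Z - P₄)⁻¹) * b :=
    fun Z => by simp only [leftMultiRatio, a, b, mul_assoc]
  have ne_of_eq : ∀ Z, leftMultiRatio P₁ P₂ P₃ P₄ Z P₆ = m → Z ≠ P₄ := by
    rintro Z hZ rfl
    simp [factor, ← hZ] at hm
  refine eq_of_sub_mul_inv_sub_eq h₆₄ (ne_of_eq X hX) (ne_of_eq Y hY) ?_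
  rw [factor] at hX hY
  exact mul_left_cancel₀ ha (mul_right_cancel₀ hb (hX.trans hY.symm))

end MultiRatio

open EuclideanGeometry

theorem inversion_eq_add_smul {V : Type*} [NormedAddCommGroup V] [InnerProductSpace ℝ V]
    (c x : V) (R : ℝ) : inversion c R x = c + (R ^ 2 / ‖x - c‖ ^ 2) • (x - c) := by
  rw [inversion, dist_eq_norm, div_pow, vsub_eq_sub, vadd_eq_add, add_comm]

theorem Quaternion.coe_mul_star_inv (s : ℝ) (q : ℍ[ℝ]) :
    (s : ℍ[ℝ]) * (star q)⁻¹ = (s / ‖q‖ ^ 2) • q := by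
  rw [inv_def, star_star, normSq_star, coe_mul_eq_smul, smul_smul, normSq_eq_norm_mul_self,
    div_eq_mul_inv, sq]

theorem Quaternion.inversion_eq_add_mul_star_inv (c x : ℍ[ℝ]) (R : ℝ) :
    inversion c R x = c + ((R ^ 2 : ℝ) : ℍ[ℝ]) * (star (x - c))⁻¹ := by
  rw [inversion_eq_add_smul, coe_mul_star_inv]

theorem leftMultiRatio_inversion {P₁ P₂ P₃ P₄ P₅ P₆ c : ℍ[ℝ]} {R : ℝ} (hR : R ≠ 0)
    (h₁ : P₁ ≠ c) (h₂ : P₂ ≠ c) (h₃ : P₃ ≠ c) (h₄ : P₄ ≠ c) (h₅ : P₅ ≠ c) (h₆ : P₆ ≠ c) :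
    leftMultiRatio (inversion c R P₁) (inversion c R P₂) (inversion c R P₃) (inversion c R P₄)
        (inversion c R P₅) (inversion c R P₆) =
      star (P₁ - c) * star (rightMultiRatio P₁ P₂ P₃ P₄ P₅ P₆) * (star (P₁ - c))⁻¹ := by
  have hR' : ((R ^ 2 : ℝ) : ℍ[ℝ]) ≠ 0 := coe_injective.ne (pow_ne_zero 2 hR)
  have hstar : ∀ {P}, P ≠ c → star (P - c) ≠ 0 := fun h => star_ne_zero.2 (sub_ne_zero.2 h)
  simp only [Quaternion.inversion_eq_add_mul_star_inv]
  rw [leftMultiRatio_add_left, leftMultiRatio_mul_left _ _ _ _ _ _ hR',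
    leftMultiRatio_inv (hstar h₁) (hstar h₂) (hstar h₃) (hstar h₄) (hstar h₅) (hstar h₆),
    star_rightMultiRatio]
  simp only [star_sub, leftMultiRatio_sub_right]

theorem leftMultiRatio_inversion_eq_neg_one {P₁ P₂ P₃ P₄ P₅ P₆ c : ℍ[ℝ]} {R : ℝ} (hR : R ≠ 0)
    (h₁ : P₁ ≠ c) (h₂ : P₂ ≠ c) (h₃ : P₃ ≠ c) (h₄ : P₄ ≠ c) (h₅ : P₅ ≠ c) (h₆ : P₆ ≠ c)
    (hM : rightMultiRatio P₁ P₂ P₃ P₄ P₅ P₆ = -1) :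
    leftMultiRatio (inversion c R P₁) (inversion c R P₂) (inversion c R P₃) (inversion c R P₄)
        (inversion c R P₅) (inversion c R P₆) = -1 := by
  rw [leftMultiRatio_inversion hR h₁ h₂ h₃ h₄ h₅ h₆, hM, star_neg, star_one, mul_neg_one, neg_mul,
    mul_inv_cancel₀ (star_ne_zero.2 (sub_ne_zero.2 h₁))]

theorem paired_configurations_related_by_sphere_inversion_general
    (Φ₁₂ Φ₁₃ Φ₁₄ Φ₂₃ Φ₂₄ Φ₃₄ Φ'₃₄ : Quaternion ℝ) (c : Quaternion ℝ) (r : ℝ)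
    (hr : 0 < r)
    (hdist : List.Pairwise (· ≠ ·) [Φ₁₂, Φ₁₃, Φ₁₄, Φ₂₃, Φ₂₄])
    (hs₁₂ : ‖Φ₁₂ - c‖ = r) (hs₁₃ : ‖Φ₁₃ - c‖ = r) (hs₁₄ : ‖Φ₁₄ - c‖ = r)
    (hs₂₃ : ‖Φ₂₃ - c‖ = r) (hs₂₄ : ‖Φ₂₄ - c‖ = r)
    (hc : Φ₃₄ ≠ c)
    (hM : rightMultiRatio Φ₁₄ Φ₁₂ Φ₂₄ Φ₂₃ Φ₃₄ Φ₁₃ = -1)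
    (hMt : leftMultiRatio Φ₁₄ Φ₁₂ Φ₂₄ Φ₂₃ Φ'₃₄ Φ₁₃ = -1) :
    Φ'₃₄ = c + (r ^ 2 / ‖Φ₃₄ - c‖ ^ 2) • (Φ₃₄ - c) := by
  have fixed : ∀ {Φ}, ‖Φ - c‖ = r → inversion c r Φ = Φ := fun h =>
    inversion_of_mem_sphere (mem_sphere_iff_norm.2 h)
  have ne_center : ∀ {Φ}, ‖Φ - c‖ = r → Φ ≠ c := by
    rintro Φ h rfl
    simp [hr.ne] at h
  have hinv := leftMultiRatio_inversion_eq_neg_one hr.ne' (ne_center hs₁₄) (ne_center hs₁₂)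
    (ne_center hs₂₄) (ne_center hs₂₃) hc (ne_center hs₁₃) hM
  rw [fixed hs₁₄, fixed hs₁₂, fixed hs₂₄, fixed hs₂₃, fixed hs₁₃] at hinv
  simp only [List.pairwise_cons, List.mem_cons, List.not_mem_nil, or_false, List.Pairwise.nil,
    and_true, forall_eq_or_imp, forall_eq] at hdist
  obtain ⟨⟨-, h₁₂₁₄, -, h₁₂₂₄⟩, ⟨h₁₃₁₄, h₁₃₂₃, -⟩, -, h₂₃₂₄, -⟩ := hdist
  rw [← inversion_eq_add_smul]
  exact eq_of_leftMultiRatio_eq h₁₃₁₄.symm h₁₂₁₄ h₁₂₂₄.symm h₂₃₂₄ h₁₃₂₃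
    (neg_ne_zero.2 one_ne_zero) hMt hinv

theorem paired_configurations_related_by_sphere_inversion
    (Φ₁₂ Φ₁₃ Φ₁₄ Φ₂₃ Φ₂₄ Φ₃₄ Φ'₃₄ : Quaternion ℝ) (c : Quaternion ℝ) (r : ℝ)
    (hr : 0 < r)
    (hdist : List.Pairwise (· ≠ ·) [Φ₁₂, Φ₁₃, Φ₁₄, Φ₂₃, Φ₂₄])
    (hspan : affineSpan ℝ ({Φ₁₂, Φ₁₃, Φ₁₄, Φ₂₃, Φ₂₄} : Set (Quaternion ℝ)) = ⊤)
    (hs₁₂ : ‖Φ₁₂ - c‖ = r) (hs₁₃ : ‖Φ₁₃ - c‖ = r) (hs₁₄ : ‖Φ₁₄ - c‖ = r)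
    (hs₂₃ : ‖Φ₂₃ - c‖ = r) (hs₂₄ : ‖Φ₂₄ - c‖ = r)
    (hd₃₄ : Φ₃₄ ∉ ({Φ₁₂, Φ₁₃, Φ₁₄, Φ₂₃, Φ₂₄} : Set (Quaternion ℝ)))
    (hd'₃₄ : Φ'₃₄ ∉ ({Φ₁₂, Φ₁₃, Φ₁₄, Φ₂₃, Φ₂₄} : Set (Quaternion ℝ)))
    (hc : Φ₃₄ ≠ c)
    (hM : rightMultiRatio Φ₁₄ Φ₁₂ Φ₂₄ Φ₂₃ Φ₃₄ Φ₁₃ = -1)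
    (hMt : leftMultiRatio Φ₁₄ Φ₁₂ Φ₂₄ Φ₂₃ Φ'₃₄ Φ₁₃ = -1) :
    Φ'₃₄ = c + (r ^ 2 / ‖Φ₃₄ - c‖ ^ 2) • (Φ₃₄ - c) :=
  paired_configurations_related_by_sphere_inversion_general Φ₁₂ Φ₁₃ Φ₁₄ Φ₂₃ Φ₂₄ Φ₃₄ Φ'₃₄ c r hr
    hdist hs₁₂ hs₁₃ hs₁₄ hs₂₃ hs₂₄ hc hM hMt
end
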